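/- arXiv:1504.01706 — 8 statements merged into one kernel-verified Lean document; each statement's English description precedes it below -/
import Mathlib

section
/- For every n ≥ 2, the number of subsets S of [n−1] whose run-length list L(S) = (l₁,…,l_k) satisfies lᵢ ≥ 2 for all 2 ≤ i ≤ k−1 equals 2·F_n, where F_n is the n-th Fibonacci number (with F₁ = F₂ = 1). -/
/-!
Let `G(u) = longRunSets u` be the subsets of `[1, u]` with no singleton run strictly inside
`[1, u]`, so that `F(n) = G(n - 1)`. Split `G(u + 2)` according to whether the last two
positions `u + 1`, `u + 2` agree. If they do, erasing `u + 2` is a bijection onto `G(u + 1)`.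
If they differ, `u + 1` must agree with `u`, and erasing `u + 2` is a bijection onto the part
of `G(u + 1)` whose last two positions agree, which is in bijection with `G(u)`. Hence
`|G(u + 2)| = |G(u + 1)| + |G(u)|`, and `|G(1)| = 2`, `|G(2)| = 4`.
-/

open Finset

theorem Finset.card_eq_of_mem_iff_erase {α : Type*} [DecidableEq α] {s t : Finset (Finset α)}
    {a : α} (q : Finset α → Prop) [DecidablePred q] (ht : ∀ T ∈ t, a ∉ T)
    (hs : ∀ S, S ∈ s ↔ S.erase a ∈ t ∧ (a ∈ S ↔ q (S.erase a))) : #s = #t := by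
  refine card_nbij' (·.erase a) (fun T => if q T then insert a T else T)
    (fun S hS => ((hs S).1 hS).1) (fun T hT => ?_) (fun S hS => ?_) (fun T hT => ?_)
  · have haT := ht T hT
    rw [mem_coe, hs]
    dsimp only
    split_ifs with hq
    · simp [erase_insert haT, mem_coe.1 hT, hq]
    · simp [mem_coe.1 hT, hq, haT]
  · obtain ⟨-, hqS⟩ := (hs S).1 hS
    dsimp only
    by_cases ha : a ∈ S
    · rw [if_pos (hqS.1 ha), insert_erase ha]
    · rw [if_neg (mt hqS.2 ha), erase_eq_of_notMem ha]
  · have haT := ht T hT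
    dsimp only
    split_ifs
    · exact erase_insert haT
    · exact erase_eq_of_notMem haT

def IsSingletonRun (S : Finset ℕ) (j : ℕ) : Prop :=
  (j ∈ S ↔ j - 1 ∉ S) ∧ (j ∈ S ↔ j + 1 ∉ S)

instance (S : Finset ℕ) (j : ℕ) : Decidable (IsSingletonRun S j) :=
  inferInstanceAs (Decidable (_ ∧ _))

/-- A run of size one other than the first and the last is a singleton run at some `1 < j < u`. -/
def HasLongInteriorRuns (u : ℕ) (S : Finset ℕ) : Prop :=
  ∀ j ∈ Ioo 1 u, ¬IsSingletonRun S j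

instance (u : ℕ) : DecidablePred (HasLongInteriorRuns u) :=
  fun _ => inferInstanceAs (Decidable (∀ j ∈ Ioo 1 u, _))

def longRunSets (u : ℕ) : Finset (Finset ℕ) :=
  {S ∈ (Icc 1 u).powerset | HasLongInteriorRuns u S}

section

variable {u j a : ℕ} {S : Finset ℕ}

theorem mem_longRunSets : S ∈ longRunSets u ↔ S ⊆ Icc 1 u ∧ HasLongInteriorRuns u S := by
  rw [longRunSets, mem_filter, mem_powerset]

theorem notMem_of_mem_longRunSets (hS : S ∈ longRunSets u) (ha : u < a) : a ∉ S := fun h => by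
  have := (mem_longRunSets.1 hS).1 h
  rw [mem_Icc] at this
  omega

theorem isSingletonRun_erase (h : j + 1 < a) :
    IsSingletonRun (S.erase a) j ↔ IsSingletonRun S j := by
  simp only [IsSingletonRun, mem_erase, ne_eq, show j ≠ a by omega, show j - 1 ≠ a by omega,
    show j + 1 ≠ a by omega, not_false_eq_true, true_and]

theorem hasLongInteriorRuns_succ :
    HasLongInteriorRuns (u + 1) S ↔
      HasLongInteriorRuns u (S.erase (u + 1)) ∧ (1 < u → ¬IsSingletonRun S u) := by
  simp only [HasLongInteriorRuns, mem_Ioo, and_imp]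
  constructor
  · intro hrun
    refine ⟨fun j h1 hj => ?_, fun h => hrun u h (by omega)⟩
    rw [isSingletonRun_erase (by omega)]
    exact hrun j h1 (by omega)
  · rintro ⟨hrun, hlast⟩ j h1 hj
    obtain hj | rfl : j < u ∨ j = u := by omega
    · rw [← isSingletonRun_erase (a := u + 1) (by omega)]
      exact hrun j h1 hj
    · exact hlast h1

theorem mem_longRunSets_succ :
    S ∈ longRunSets (u + 1) ↔
      S.erase (u + 1) ∈ longRunSets u ∧ (1 < u → ¬IsSingletonRun S u) := by
  rw [mem_longRunSets, mem_longRunSets, hasLongInteriorRuns_succ, ← subset_insert_iff,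
    ← Order.succ_eq_add_one, insert_Icc_right_eq_Icc_succ (by simp), and_assoc]

theorem not_isSingletonRun_of_iff (h : j + 1 ∈ S ↔ j ∈ S) : ¬IsSingletonRun S j :=
  fun hrun => iff_not_self (h.trans hrun.2)

theorem card_filter_agree :
    #{S ∈ longRunSets (u + 1) | u + 1 ∈ S ↔ u ∈ S} = #(longRunSets u) := by
  refine card_eq_of_mem_iff_erase (a := u + 1) (u ∈ ·)
    (fun T hT => notMem_of_mem_longRunSets hT (Nat.lt_succ_self u)) fun S => ?_
  rw [mem_filter, mem_longRunSets_succ, mem_erase, and_iff_right (Nat.lt_succ_self u).ne]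
  exact ⟨fun ⟨⟨hT, _⟩, h⟩ => ⟨hT, h⟩, fun ⟨hT, h⟩ => ⟨⟨hT, fun _ => not_isSingletonRun_of_iff h⟩, h⟩⟩

theorem card_filter_differ (hu : 1 ≤ u) :
    #{S ∈ longRunSets (u + 2) | ¬(u + 2 ∈ S ↔ u + 1 ∈ S)} =
      #{T ∈ longRunSets (u + 1) | u + 1 ∈ T ↔ u ∈ T} := by
  refine card_eq_of_mem_iff_erase (a := u + 2) (u + 1 ∉ ·)
    (fun T hT => notMem_of_mem_longRunSets (mem_filter.1 hT).1 (by omega)) fun S => ?_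
  -- Once `u + 1` and `u + 2` differ, `u + 1` is a singleton run exactly when it differs from `u`.
  simp only [mem_filter, mem_longRunSets_succ, mem_erase, ne_eq, show u + 1 ≠ u + 2 by omega,
    show u ≠ u + 2 by omega, not_false_eq_true, true_and, IsSingletonRun, Nat.add_sub_cancel,
    show 1 < u + 1 by omega, forall_const]
  tauto

theorem card_longRunSets_add_two (hu : 1 ≤ u) :
    #(longRunSets (u + 2)) = #(longRunSets (u + 1)) + #(longRunSets u) := by
  rw [← card_filter_add_card_filter_not (p := fun S => u + 2 ∈ S ↔ u + 1 ∈ S),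
    card_filter_agree (u := u + 1), card_filter_differ hu, card_filter_agree]

end

theorem card_longRunSets (u : ℕ) : #(longRunSets (u + 1)) = 2 * Nat.fib (u + 2) := by
  induction u using Nat.twoStepInduction with
  | zero => decide
  | one => decide
  | more u ih₀ ih₁ =>
    rw [card_longRunSets_add_two (by omega), ih₀, ih₁, Nat.fib_add_two (n := u + 2)]
    ring

/-- subsets of `[n-1]` all of whose interior runs have length at
least `2` are counted by twice the Fibonacci numbers. -/
theorem stmt_2 (n : ℕ) (hn : 2 ≤ n) :
    Nat.card {S : Finset ℕ // S ⊆ Finset.Icc 1 (n - 1) ∧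
      ∀ j : ℕ, 2 ≤ j → j ≤ n - 2 →
        ¬ (((j ∈ S) ↔ (j - 1 ∉ S)) ∧ ((j ∈ S) ↔ (j + 1 ∉ S)))} =
    2 * Nat.fib n := by
  obtain ⟨u, rfl⟩ : ∃ u, n = u + 2 := ⟨n - 2, by omega⟩
  rw [← card_longRunSets, ← Nat.card_eq_finsetCard]
  refine Nat.card_congr (Equiv.subtypeEquivRight fun S => ?_)
  simp only [mem_longRunSets, HasLongInteriorRuns, mem_Ioo, and_imp, Nat.lt_add_one_iff,
    Nat.add_sub_cancel]
  rfl
end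

section
/- There is no finite poset P on [d] whose chain polytope C(P) has exactly d+4 vertices and exactly d+7 facets. Equivalently: there is no finite poset P on [d] with exactly d+4 antichains and exactly 7 maximal chains. -/
section ChainAux

variable {d : ℕ} {r : Fin d → Fin d → Prop}

private lemma isMaxChain_iff' (C : Set (Fin d)) :
    IsMaxChain r C ↔ IsChain r C ∧ ∀ x, (∀ y ∈ C, x ≠ y → r x y ∨ r y x) → x ∈ C := by
  constructor
  · rintro ⟨h1, h2⟩
    refine ⟨h1, fun x hx => ?_⟩
    have h3 : IsChain r (insert x C) := h1.insert hx
    have h4 := h2 h3 (Set.subset_insert x C)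
    rw [h4]; exact Set.mem_insert x C
  · rintro ⟨h1, h2⟩
    exact ⟨h1, fun t ht hsub => hsub.antisymm fun x hx =>
      h2 x fun y hy hne => ht hx (hsub hy) hne⟩

private lemma mem_maxChain_iff (hrefl : ∀ x, r x x) {C : Set (Fin d)}
    (hC : IsMaxChain r C) (z : Fin d) :
    z ∈ C ↔ ∀ w, (¬ r z w ∧ ¬ r w z) → w ∉ C := by
  constructor
  · intro hz w hw hwC
    rcases eq_or_ne z w with h | h
    · exact hw.1 (h ▸ hrefl z)
    · rcases hC.1 hz hwC h with h' | h'
      · exact hw.1 h'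
      · exact hw.2 h'
  · intro h
    refine ((isMaxChain_iff' C).1 hC).2 z fun y hy hne => ?_
    by_contra hc
    push_neg at hc
    exact h y hc hy

private lemma mem_pair_decomp {a : Fin d} {e : Finset (Fin d)} (he : e.card = 2) (ha : a ∈ e) :
    ∃ b, a ≠ b ∧ e = {a, b} := by
  obtain ⟨u, v, huv, rfl⟩ := Finset.card_eq_two.1 he
  rcases Finset.mem_insert.1 ha with rfl | h
  · exact ⟨v, huv, rfl⟩
  · rw [Finset.mem_singleton.1 h]
    exact ⟨u, (Finset.mem_singleton.1 h ▸ huv.symm : _), Finset.pair_comm u v⟩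

private lemma share_bound (hrefl : ∀ x, r x x)
    {e f g : Finset (Fin d)} (he : e.card = 2) (hf : f.card = 2) (hg : g.card = 2)
    (hshare : (e ∩ f).Nonempty)
    (hNC : ∀ z w, (¬ r z w ∧ ¬ r w z) ↔
      (({z, w} : Finset (Fin d)) = e ∨ ({z, w} : Finset (Fin d)) = f ∨
        ({z, w} : Finset (Fin d)) = g)) :
    Nat.card {C : Set (Fin d) // IsMaxChain r C} ≤ 6 := by
  classical
  obtain ⟨a, ha⟩ := hshare
  obtain ⟨b, hab, heq⟩ := mem_pair_decomp he (Finset.mem_of_mem_inter_left ha)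
  obtain ⟨c, hac, hfq⟩ := mem_pair_decomp hf (Finset.mem_of_mem_inter_right ha)
  obtain ⟨x, y, hxy, hgq⟩ := Finset.card_eq_two.1 hg
  -- incomparability implies distinctness
  have hne : ∀ z w : Fin d, (¬ r z w ∧ ¬ r w z) → z ≠ w := by
    rintro z w h rfl; exact h.1 (hrefl z)
  -- membership extraction from pair equality
  have pairL : ∀ {z w u v : Fin d}, ({z, w} : Finset (Fin d)) = {u, v} → z = u ∨ z = v := by
    intro z w u v h
    have : z ∈ ({u, v} : Finset (Fin d)) := by
      rw [← h]; exact Finset.mem_insert_self z {w}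
    simpa using this
  have pairR : ∀ {z w u v : Fin d}, ({z, w} : Finset (Fin d)) = {u, v} → w = u ∨ w = v := by
    intro z w u v h
    have : w ∈ ({u, v} : Finset (Fin d)) := by
      rw [← h]; simp
    simpa using this
  -- partner analysis
  have partner : ∀ z w, (¬ r z w ∧ ¬ r w z) →
      w = a ∨ w = b ∨ w = c ∨ w = x ∨ w = y := by
    intro z w h
    rcases (hNC z w).1 h with h' | h' | h'
    · rw [heq] at h'; rcases pairR h' with h'' | h'' <;> tauto
    · rw [hfq] at h'; rcases pairR h' with h'' | h'' <;> tauto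
    · rw [hgq] at h'; rcases pairR h' with h'' | h'' <;> tauto
  have partner_b : ∀ w, (¬ r b w ∧ ¬ r w b) → w = a ∨ w = x ∨ w = y := by
    intro w h
    have hbw := hne _ _ h
    rcases (hNC b w).1 h with h' | h' | h'
    · rw [heq] at h'
      rcases pairR h' with h'' | h''
      · tauto
      · exact (hbw h''.symm).elim
    · rw [hfq] at h'
      -- b ∈ {a, c}
      rcases pairL h' with h'' | h''
      · exact (hab h''.symm).elim
      · -- b = c, so {b, w} = {a, c} = {a, b}; w = a or w = b
        subst h''
        rcases pairR h' with h3 | h3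
        · tauto
        · exact (hbw h3.symm).elim
    · rw [hgq] at h'; rcases pairR h' with h'' | h'' <;> tauto
  have partner_c : ∀ w, (¬ r c w ∧ ¬ r w c) → w = a ∨ w = x ∨ w = y := by
    intro w h
    have hcw := hne _ _ h
    rcases (hNC c w).1 h with h' | h' | h'
    · rw [heq] at h'
      rcases pairL h' with h'' | h''
      · exact (hac h''.symm).elim
      · subst h''
        rcases pairR h' with h3 | h3
        · tauto
        · exact (hcw h3.symm).elim
    · rw [hfq] at h'
      rcases pairR h' with h'' | h''
      · tauto
      · exact (hcw h''.symm).elim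
    · rw [hgq] at h'; rcases pairR h' with h'' | h'' <;> tauto
  -- not both endpoints of g
  have hNCxy : ¬ r x y ∧ ¬ r y x := (hNC x y).2 (Or.inr (Or.inr hgq.symm))
  have notBoth : ∀ C : {C : Set (Fin d) // IsMaxChain r C}, ¬ (x ∈ C.1 ∧ y ∈ C.1) := by
    rintro C ⟨h1, h2⟩
    rcases C.2.1 h1 h2 hxy with h | h
    · exact hNCxy.1 h
    · exact hNCxy.2 h
  -- the injection
  set F : {C : Set (Fin d) // IsMaxChain r C} → Bool × Fin 3 :=
    fun C => (decide (a ∈ C.1), if x ∈ C.1 then 0 else if y ∈ C.1 then 1 else 2) with hF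
  have hinj : Function.Injective F := by
    intro C D hCD
    have hfst : (a ∈ C.1) ↔ (a ∈ D.1) := by
      have := congrArg Prod.fst hCD
      simpa [hF] using this
    have hsnd := congrArg Prod.snd hCD
    simp only [hF] at hsnd
    have hxm : (x ∈ C.1 ↔ x ∈ D.1) ∧ (y ∈ C.1 ↔ y ∈ D.1) := by
      have nbC := notBoth C
      have nbD := notBoth D
      by_cases h1 : x ∈ C.1 <;> by_cases h2 : x ∈ D.1 <;>
        by_cases h3 : y ∈ C.1 <;> by_cases h4 : y ∈ D.1 <;>
        simp [h1, h2, h3, h4] at hsnd ⊢ <;>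
        first
          | tauto
          | exact absurd hsnd (by decide)
    -- agreement on b and c
    have agree : ∀ z : Fin d,
        (∀ w, (¬ r z w ∧ ¬ r w z) → (w ∈ C.1 ↔ w ∈ D.1)) → (z ∈ C.1 ↔ z ∈ D.1) := by
      intro z hz
      rw [mem_maxChain_iff hrefl C.2 z, mem_maxChain_iff hrefl D.2 z]
      exact ⟨fun h w hw hwD => h w hw ((hz w hw).2 hwD),
             fun h w hw hwC => h w hw ((hz w hw).1 hwC)⟩
    have hbm : b ∈ C.1 ↔ b ∈ D.1 := by
      refine agree b fun w hw => ?_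
      rcases partner_b w hw with rfl | rfl | rfl
      · exact hfst
      · exact hxm.1
      · exact hxm.2
    have hcm : c ∈ C.1 ↔ c ∈ D.1 := by
      refine agree c fun w hw => ?_
      rcases partner_c w hw with rfl | rfl | rfl
      · exact hfst
      · exact hxm.1
      · exact hxm.2
    apply Subtype.ext
    ext z
    refine agree z fun w hw => ?_
    rcases partner z w hw with rfl | rfl | rfl | rfl | rfl
    · exact hfst
    · exact hbm
    · exact hcm
    · exact hxm.1
    · exact hxm.2
  have hle := Nat.card_le_card_of_injective F hinj
  simpa using hle

end ChainAux

section ChainAux2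

variable {d : ℕ} {r : Fin d → Fin d → Prop}

private lemma isMaxChain_iff'' (C : Set (Fin d)) :
    IsMaxChain r C ↔ IsChain r C ∧ ∀ x, (∀ y ∈ C, x ≠ y → r x y ∨ r y x) → x ∈ C := by
  constructor
  · rintro ⟨h1, h2⟩
    refine ⟨h1, fun x hx => ?_⟩
    have h3 : IsChain r (insert x C) := h1.insert hx
    have h4 := h2 h3 (Set.subset_insert x C)
    rw [h4]; exact Set.mem_insert x C
  · rintro ⟨h1, h2⟩
    exact ⟨h1, fun t ht hsub => hsub.antisymm fun x hx =>
      h2 x fun y hy hne => ht hx (hsub hy) hne⟩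

private lemma disjoint_bound (hrefl : ∀ x, r x x)
    {e1 e2 e3 : Finset (Fin d)} (h1 : e1.card = 2) (h2 : e2.card = 2) (h3 : e3.card = 2)
    (d12 : e1 ∩ e2 = ∅) (d13 : e1 ∩ e3 = ∅) (d23 : e2 ∩ e3 = ∅)
    (hNC : ∀ z w, (¬ r z w ∧ ¬ r w z) ↔
      (({z, w} : Finset (Fin d)) = e1 ∨ ({z, w} : Finset (Fin d)) = e2 ∨
        ({z, w} : Finset (Fin d)) = e3)) :
    8 ≤ Nat.card {C : Set (Fin d) // IsMaxChain r C} := by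
  classical
  obtain ⟨a1, b1, hab1, he1⟩ := Finset.card_eq_two.1 h1
  obtain ⟨a2, b2, hab2, he2⟩ := Finset.card_eq_two.1 h2
  obtain ⟨a3, b3, hab3, he3⟩ := Finset.card_eq_two.1 h3
  have dis12 : ∀ z : Fin d, z ∈ e1 → z ∈ e2 → False := by
    intro z hz hz'
    have : z ∈ e1 ∩ e2 := Finset.mem_inter.2 ⟨hz, hz'⟩
    rw [d12] at this; simp at this
  have dis13 : ∀ z : Fin d, z ∈ e1 → z ∈ e3 → False := by
    intro z hz hz'
    have : z ∈ e1 ∩ e3 := Finset.mem_inter.2 ⟨hz, hz'⟩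
    rw [d13] at this; simp at this
  have dis23 : ∀ z : Fin d, z ∈ e2 → z ∈ e3 → False := by
    intro z hz hz'
    have : z ∈ e2 ∩ e3 := Finset.mem_inter.2 ⟨hz, hz'⟩
    rw [d23] at this; simp at this
  -- excluded / kept endpoints
  set exc1 : Bool → Fin d := fun p => if p then b1 else a1 with hexc1
  set exc2 : Bool → Fin d := fun p => if p then b2 else a2 with hexc2
  set exc3 : Bool → Fin d := fun p => if p then b3 else a3 with hexc3
  set kp1 : Bool → Fin d := fun p => if p then a1 else b1 with hkp1
  set kp2 : Bool → Fin d := fun p => if p then a2 else b2 with hkp2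
  set kp3 : Bool → Fin d := fun p => if p then a3 else b3 with hkp3
  have exc1mem : ∀ p, exc1 p ∈ e1 := by intro p; cases p <;> simp [hexc1, he1]
  have exc2mem : ∀ p, exc2 p ∈ e2 := by intro p; cases p <;> simp [hexc2, he2]
  have exc3mem : ∀ p, exc3 p ∈ e3 := by intro p; cases p <;> simp [hexc3, he3]
  have kp1mem : ∀ p, kp1 p ∈ e1 := by intro p; cases p <;> simp [hkp1, he1]
  have kp2mem : ∀ p, kp2 p ∈ e2 := by intro p; cases p <;> simp [hkp2, he2]
  have kp3mem : ∀ p, kp3 p ∈ e3 := by intro p; cases p <;> simp [hkp3, he3]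
  have kpne1 : ∀ p, kp1 p ≠ exc1 p := by intro p; cases p <;> simp [hkp1, hexc1] <;> [exact hab1.symm; exact hab1]
  have kpne2 : ∀ p, kp2 p ≠ exc2 p := by intro p; cases p <;> simp [hkp2, hexc2] <;> [exact hab2.symm; exact hab2]
  have kpne3 : ∀ p, kp3 p ≠ exc3 p := by intro p; cases p <;> simp [hkp3, hexc3] <;> [exact hab3.symm; exact hab3]
  have pair1 : ∀ p, ({exc1 p, kp1 p} : Finset (Fin d)) = e1 := by
    intro p; cases p <;> simp [hkp1, hexc1, he1, Finset.pair_comm]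
  have pair2 : ∀ p, ({exc2 p, kp2 p} : Finset (Fin d)) = e2 := by
    intro p; cases p <;> simp [hkp2, hexc2, he2, Finset.pair_comm]
  have pair3 : ∀ p, ({exc3 p, kp3 p} : Finset (Fin d)) = e3 := by
    intro p; cases p <;> simp [hkp3, hexc3, he3, Finset.pair_comm]
  set F : Bool × Bool × Bool → Set (Fin d) :=
    fun t => {z | z ≠ exc1 t.1 ∧ z ≠ exc2 t.2.1 ∧ z ≠ exc3 t.2.2} with hFdef
  have hchain : ∀ t, IsChain r (F t) := by
    rintro t z hz w hw hzw
    obtain ⟨hz1, hz2, hz3⟩ := hz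
    obtain ⟨hw1, hw2, hw3⟩ := hw
    by_contra hc
    push_neg at hc
    rcases (hNC z w).1 hc with h | h | h
    · have hm : exc1 t.1 ∈ ({z, w} : Finset (Fin d)) := by rw [h]; exact exc1mem _
      rcases Finset.mem_insert.1 hm with h' | h'
      · exact hz1 h'.symm
      · exact hw1 (Finset.mem_singleton.1 h').symm
    · have hm : exc2 t.2.1 ∈ ({z, w} : Finset (Fin d)) := by rw [h]; exact exc2mem _
      rcases Finset.mem_insert.1 hm with h' | h'
      · exact hz2 h'.symm
      · exact hw2 (Finset.mem_singleton.1 h').symm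
    · have hm : exc3 t.2.2 ∈ ({z, w} : Finset (Fin d)) := by rw [h]; exact exc3mem _
      rcases Finset.mem_insert.1 hm with h' | h'
      · exact hz3 h'.symm
      · exact hw3 (Finset.mem_singleton.1 h').symm
  have hmax : ∀ t, IsMaxChain r (F t) := by
    intro t
    refine (isMaxChain_iff'' _).2 ⟨hchain t, ?_⟩
    intro x hx
    refine ⟨?_, ?_, ?_⟩
    · intro hxe
      have hoin : kp1 t.1 ∈ F t := by
        refine ⟨kpne1 t.1, ?_, ?_⟩
        · intro h; exact dis12 _ (kp1mem t.1) (h ▸ exc2mem t.2.1)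
        · intro h; exact dis13 _ (kp1mem t.1) (h ▸ exc3mem t.2.2)
      have hxo : x ≠ kp1 t.1 := by rw [hxe]; exact fun h => kpne1 t.1 h.symm
      have hcomp := hx _ hoin hxo
      have hnc : ¬ r x (kp1 t.1) ∧ ¬ r (kp1 t.1) x :=
        (hNC x (kp1 t.1)).2 (Or.inl (by rw [hxe]; exact pair1 t.1))
      tauto
    · intro hxe
      have hoin : kp2 t.2.1 ∈ F t := by
        refine ⟨?_, kpne2 t.2.1, ?_⟩
        · intro h; exact dis12 _ (h ▸ exc1mem t.1) (kp2mem t.2.1)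
        · intro h; exact dis23 _ (kp2mem t.2.1) (h ▸ exc3mem t.2.2)
      have hxo : x ≠ kp2 t.2.1 := by rw [hxe]; exact fun h => kpne2 t.2.1 h.symm
      have hcomp := hx _ hoin hxo
      have hnc : ¬ r x (kp2 t.2.1) ∧ ¬ r (kp2 t.2.1) x :=
        (hNC x (kp2 t.2.1)).2 (Or.inr (Or.inl (by rw [hxe]; exact pair2 t.2.1)))
      tauto
    · intro hxe
      have hoin : kp3 t.2.2 ∈ F t := by
        refine ⟨?_, ?_, kpne3 t.2.2⟩
        · intro h; exact dis13 _ (h ▸ exc1mem t.1) (kp3mem t.2.2)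
        · intro h; exact dis23 _ (h ▸ exc2mem t.2.1) (kp3mem t.2.2)
      have hxo : x ≠ kp3 t.2.2 := by rw [hxe]; exact fun h => kpne3 t.2.2 h.symm
      have hcomp := hx _ hoin hxo
      have hnc : ¬ r x (kp3 t.2.2) ∧ ¬ r (kp3 t.2.2) x :=
        (hNC x (kp3 t.2.2)).2 (Or.inr (Or.inr (by rw [hxe]; exact pair3 t.2.2)))
      tauto
  -- membership tests
  have hmem1 : ∀ t : Bool × Bool × Bool, a1 ∈ F t ↔ t.1 = true := by
    intro t
    constructor
    · rintro ⟨u1, u2, u3⟩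
      cases ht : t.1
      · rw [ht] at u1; simp [hexc1] at u1
      · rfl
    · intro ht
      refine ⟨?_, ?_, ?_⟩
      · rw [ht]; simpa [hexc1] using hab1
      · intro h; exact dis12 a1 (by simp [he1]) (h ▸ exc2mem t.2.1)
      · intro h; exact dis13 a1 (by simp [he1]) (h ▸ exc3mem t.2.2)
  have hmem2 : ∀ t : Bool × Bool × Bool, a2 ∈ F t ↔ t.2.1 = true := by
    intro t
    constructor
    · rintro ⟨u1, u2, u3⟩
      cases ht : t.2.1
      · rw [ht] at u2; simp [hexc2] at u2
      · rfl
    · intro ht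
      refine ⟨?_, ?_, ?_⟩
      · intro h; exact dis12 a2 (h ▸ exc1mem t.1) (by simp [he2])
      · rw [ht]; simpa [hexc2] using hab2
      · intro h; exact dis23 a2 (by simp [he2]) (h ▸ exc3mem t.2.2)
  have hmem3 : ∀ t : Bool × Bool × Bool, a3 ∈ F t ↔ t.2.2 = true := by
    intro t
    constructor
    · rintro ⟨u1, u2, u3⟩
      cases ht : t.2.2
      · rw [ht] at u3; simp [hexc3] at u3
      · rfl
    · intro ht
      refine ⟨?_, ?_, ?_⟩
      · intro h; exact dis13 a3 (h ▸ exc1mem t.1) (by simp [he3])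
      · intro h; exact dis23 a3 (h ▸ exc2mem t.2.1) (by simp [he3])
      · rw [ht]; simpa [hexc3] using hab3
  set G : Bool × Bool × Bool → {C : Set (Fin d) // IsMaxChain r C} :=
    fun t => ⟨F t, hmax t⟩ with hGdef
  have hinj : Function.Injective G := by
    intro t s h
    have h' : F t = F s := congrArg Subtype.val h
    have q1 : t.1 = s.1 := by
      have i1 := hmem1 t
      rw [h'] at i1
      exact Bool.eq_iff_iff.mpr (i1.symm.trans (hmem1 s)).symm.symm
    have q2 : t.2.1 = s.2.1 := by
      have i1 := hmem2 t
      rw [h'] at i1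
      exact Bool.eq_iff_iff.mpr (i1.symm.trans (hmem2 s)).symm.symm
    have q3 : t.2.2 = s.2.2 := by
      have i1 := hmem3 t
      rw [h'] at i1
      exact Bool.eq_iff_iff.mpr (i1.symm.trans (hmem3 s)).symm.symm
    exact Prod.ext q1 (Prod.ext q2 q3)
  have hle := Nat.card_le_card_of_injective G hinj
  simpa using hle

end ChainAux2

set_option maxHeartbeats 1600000 in
/-- no finite poset on `[d]` has exactly `d + 4` antichains and
exactly `7` maximal chains (equivalently, no chain polytope has `d + 4` vertices
and `d + 7` facets). -/
theorem stmt_4 (d : ℕ) (r : Fin d → Fin d → Prop) (hpo : IsPartialOrder (Fin d) r) :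
    ¬ (Nat.card {A : Finset (Fin d) //
          (A : Set (Fin d)).Pairwise fun a b => ¬ r a b ∧ ¬ r b a} = d + 4 ∧
       Nat.card {C : Set (Fin d) // IsMaxChain r C} = 7) := by
  classical
  rintro ⟨hA, hM⟩
  have hrefl : ∀ x, r x x := hpo.refl
  set P : Finset (Fin d) → Prop :=
    fun A => (A : Set (Fin d)).Pairwise fun a b => ¬ r a b ∧ ¬ r b a with hPdef
  set T : Finset (Finset (Fin d)) := Finset.univ.filter P with hTdef
  have hTcard : T.card = d + 4 := by
    rw [← hA, Nat.card_eq_fintype_card, Fintype.card_subtype]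
  set T2 : Finset (Finset (Fin d)) := T.filter (fun A => 2 ≤ A.card) with hT2def
  -- small antichains
  have hsplit := Finset.card_filter_add_card_filter_not
    (s := T) (p := fun A => 2 ≤ A.card)
  have hT1 : T.filter (fun A => ¬ 2 ≤ A.card)
      = insert (∅ : Finset (Fin d)) (Finset.univ.image fun i : Fin d => ({i} : Finset (Fin d))) := by
    ext A
    simp only [Finset.mem_filter, Finset.mem_insert, Finset.mem_image, Finset.mem_univ,
      true_and, not_le]
    constructor
    · rintro ⟨hAT, hlt⟩
      interval_cases h : A.card
      · exact Or.inl (Finset.card_eq_zero.1 h)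
      · obtain ⟨i, hi⟩ := Finset.card_eq_one.1 h
        exact Or.inr ⟨i, hi.symm⟩
    · rintro (rfl | ⟨i, rfl⟩)
      · constructor
        · rw [hTdef]
          refine Finset.mem_filter.2 ⟨Finset.mem_univ _, ?_⟩
          simp [hPdef]
        · simp
      · constructor
        · rw [hTdef]
          refine Finset.mem_filter.2 ⟨Finset.mem_univ _, ?_⟩
          simp [hPdef]
        · simp
  have hT1card : (T.filter (fun A => ¬ 2 ≤ A.card)).card = d + 1 := by
    rw [hT1, Finset.card_insert_of_notMem, Finset.card_image_of_injective _ Finset.singleton_injective]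
    · simp [add_comm]
    · simp only [Finset.mem_image]
      rintro ⟨i, -, h⟩
      exact Finset.singleton_ne_empty i h
  have hT2card : T2.card = 3 := by
    rw [hT2def]
    omega
  -- every antichain in T2 has exactly two elements
  have hsmall : ∀ A ∈ T2, A.card = 2 := by
    intro A hAmem
    by_contra hne2
    have h2le : 2 ≤ A.card := (Finset.mem_filter.1 hAmem).2
    have h3le : 3 ≤ A.card := by omega
    obtain ⟨B, hBsub, hB3⟩ := Finset.exists_subset_card_eq h3le
    obtain ⟨u, v, w, huv, huw, hvw, rfl⟩ := Finset.card_eq_three.1 hB3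
    have hPA : P A := (Finset.mem_filter.1 (Finset.mem_filter.1 hAmem).1).2
    have hmemT2 : ∀ S : Finset (Fin d), S ⊆ A → 2 ≤ S.card → S ∈ T2 := by
      intro S hS hScard
      refine Finset.mem_filter.2 ⟨Finset.mem_filter.2 ⟨Finset.mem_univ _, ?_⟩, hScard⟩
      exact Set.Pairwise.mono (Finset.coe_subset.2 hS) hPA
    have hu : u ∈ A := hBsub (by simp)
    have hv : v ∈ A := hBsub (by simp)
    have hw : w ∈ A := hBsub (by simp)
    have m1 : ({u, v} : Finset (Fin d)) ∈ T2 :=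
      hmemT2 _ (by simp [Finset.insert_subset_iff, hu, hv]) (by rw [Finset.card_pair huv])
    have m2 : ({u, w} : Finset (Fin d)) ∈ T2 :=
      hmemT2 _ (by simp [Finset.insert_subset_iff, hu, hw]) (by rw [Finset.card_pair huw])
    have m3 : ({v, w} : Finset (Fin d)) ∈ T2 :=
      hmemT2 _ (by simp [Finset.insert_subset_iff, hv, hw]) (by rw [Finset.card_pair hvw])
    have m4 : ({u, v, w} : Finset (Fin d)) ∈ T2 :=
      hmemT2 _ hBsub (by rw [hB3]; norm_num)
    have hsub : ({{u, v}, {u, w}, {v, w}, {u, v, w}} : Finset (Finset (Fin d))) ⊆ T2 := by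
      intro S hS
      simp only [Finset.mem_insert, Finset.mem_singleton] at hS
      rcases hS with rfl | rfl | rfl | rfl <;> assumption
    have hc12 : ({u, v} : Finset (Fin d)) ≠ {u, w} := by
      intro h
      have : w ∈ ({u, v} : Finset (Fin d)) := by rw [h]; simp
      simp only [Finset.mem_insert, Finset.mem_singleton] at this
      rcases this with h' | h' <;> [exact huw h'.symm; exact hvw h'.symm]
    have hc13 : ({u, v} : Finset (Fin d)) ≠ {v, w} := by
      intro h
      have : w ∈ ({u, v} : Finset (Fin d)) := by rw [h]; simp
      simp only [Finset.mem_insert, Finset.mem_singleton] at this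
      rcases this with h' | h' <;> [exact huw h'.symm; exact hvw h'.symm]
    have hc23 : ({u, w} : Finset (Fin d)) ≠ {v, w} := by
      intro h
      have : v ∈ ({u, w} : Finset (Fin d)) := by rw [h]; simp
      simp only [Finset.mem_insert, Finset.mem_singleton] at this
      rcases this with h' | h' <;> [exact huv h'.symm; exact hvw h']
    have hcB1 : ({u, v} : Finset (Fin d)) ≠ {u, v, w} := by
      intro h
      have := Finset.card_pair huv
      rw [h, hB3] at this
      omega
    have hcB2 : ({u, w} : Finset (Fin d)) ≠ {u, v, w} := by
      intro h
      have := Finset.card_pair huw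
      rw [h, hB3] at this
      omega
    have hcB3 : ({v, w} : Finset (Fin d)) ≠ {u, v, w} := by
      intro h
      have := Finset.card_pair hvw
      rw [h, hB3] at this
      omega
    have hc4 : ({{u, v}, {u, w}, {v, w}, {u, v, w}} : Finset (Finset (Fin d))).card = 4 := by
      rw [Finset.card_insert_of_notMem (by simp [hc12, hc13, hcB1]),
        Finset.card_insert_of_notMem (by simp [hc23, hcB2]),
        Finset.card_insert_of_notMem (by simp [hcB3]),
        Finset.card_singleton]
    have := Finset.card_le_card hsub
    omega
  -- extract the three edges
  obtain ⟨e1, e2, e3, h12, h13, h23, hT2eq⟩ := Finset.card_eq_three.1 hT2card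
  have he1c : e1.card = 2 := hsmall e1 (by rw [hT2eq]; simp)
  have he2c : e2.card = 2 := hsmall e2 (by rw [hT2eq]; simp)
  have he3c : e3.card = 2 := hsmall e3 (by rw [hT2eq]; simp)
  have hNC : ∀ z w, (¬ r z w ∧ ¬ r w z) ↔
      (({z, w} : Finset (Fin d)) = e1 ∨ ({z, w} : Finset (Fin d)) = e2 ∨
        ({z, w} : Finset (Fin d)) = e3) := by
    intro z w
    constructor
    · intro h
      have hzw : z ≠ w := by rintro rfl; exact h.1 (hrefl z)
      have hpair : ({z, w} : Finset (Fin d)) ∈ T2 := by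
        refine Finset.mem_filter.2 ⟨Finset.mem_filter.2 ⟨Finset.mem_univ _, ?_⟩, ?_⟩
        · rw [hPdef]
          simp only [Finset.coe_insert, Finset.coe_singleton]
          rw [Set.pairwise_insert]
          refine ⟨Set.pairwise_singleton _ _, ?_⟩
          rintro b hb -
          rw [Set.mem_singleton_iff] at hb
          subst hb
          exact ⟨⟨h.1, h.2⟩, ⟨h.2, h.1⟩⟩
        · rw [Finset.card_pair hzw]
      rw [hT2eq] at hpair
      simpa using hpair
    · intro h
      have hmem : ({z, w} : Finset (Fin d)) ∈ T2 := by
        rw [hT2eq]; rcases h with h | h | h <;> simp [h]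
      have hcard2 : ({z, w} : Finset (Fin d)).card = 2 := hsmall _ hmem
      have hzw : z ≠ w := by
        rintro rfl
        simp at hcard2
      have hP : P ({z, w} : Finset (Fin d)) :=
        (Finset.mem_filter.1 (Finset.mem_filter.1 hmem).1).2
      exact hP (by simp) (by simp) hzw
  by_cases c12 : (e1 ∩ e2).Nonempty
  · have := share_bound hrefl he1c he2c he3c c12 hNC
    omega
  by_cases c13 : (e1 ∩ e3).Nonempty
  · have hNC' : ∀ z w, (¬ r z w ∧ ¬ r w z) ↔
        (({z, w} : Finset (Fin d)) = e1 ∨ ({z, w} : Finset (Fin d)) = e3 ∨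
          ({z, w} : Finset (Fin d)) = e2) := by
      intro z w
      rw [hNC z w]
      tauto
    have := share_bound hrefl he1c he3c he2c c13 hNC'
    omega
  by_cases c23 : (e2 ∩ e3).Nonempty
  · have hNC' : ∀ z w, (¬ r z w ∧ ¬ r w z) ↔
        (({z, w} : Finset (Fin d)) = e2 ∨ ({z, w} : Finset (Fin d)) = e3 ∨
          ({z, w} : Finset (Fin d)) = e1) := by
      intro z w
      rw [hNC z w]
      tauto
    have := share_bound hrefl he2c he3c he1c c23 hNC'
    omega
  · have d12 := Finset.not_nonempty_iff_eq_empty.1 c12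
    have d13 := Finset.not_nonempty_iff_eq_empty.1 c13
    have d23 := Finset.not_nonempty_iff_eq_empty.1 c23
    have := disjoint_bound hrefl he1c he2c he3c d12 d13 d23 hNC
    omega
end

section
/- For every d ≥ 5 and every finite poset P on [d], the number of facets of the order polytope O(P), namely m⋆(P) + m⋆(P) + |E(P)| (number of minimal elements plus number of maximal elements plus number of cover relations), is at most ⌊(d+1)/2⌋·(d − ⌊(d+1)/2⌋) + d. -/
/-- `b` covers `a` in the partial order `r`. -/
def covRel {α : Type*} (r : α → α → Prop) (a b : α) : Prop :=
  r a b ∧ a ≠ b ∧ ∀ c, r a c → r c b → c = a ∨ c = b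

/-!
Call an element isolated if it is both minimal and maximal, and let `i` be their number.
Inclusion–exclusion gives `m⋆ + m⋆ ≤ d + i`. Every cover relation joins two non-isolated
elements, and the Hasse diagram is triangle-free, so by Mantel's theorem `|E| ≤ (d - i)² / 4`.
Finally `(d - i)² / 4 + i ≤ d² / 4` as soon as `d ≥ 4`, and `d² / 4 = ⌊(d+1)/2⌋ (d - ⌊(d+1)/2⌋)`.
-/

open Finset SimpleGraph

theorem SimpleGraph.CliqueFree.four_mul_card_edgeFinset_le {V : Type*} [Fintype V]
    {G : SimpleGraph V} [DecidableRel G.Adj] (h : G.CliqueFree 3) :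
    4 * #G.edgeFinset ≤ Fintype.card V ^ 2 := by
  have turan := h.card_edgeFinset_le (r := 2)
  have : (Fintype.card V % 2).choose 2 = 0 := Nat.choose_eq_zero_of_lt (Nat.mod_lt _ two_pos)
  simp only at turan
  omega

theorem Nat.ceil_half_mul_floor_half_eq (n : ℕ) :
    (n + 1) / 2 * (n - (n + 1) / 2) = n ^ 2 / 4 := by
  obtain ⟨k, rfl | rfl⟩ := Nat.even_or_odd' n
  · rw [show (2 * k + 1) / 2 = k by omega, show 2 * k - k = k by omega,
      show (2 * k) ^ 2 = 4 * (k * k) by ring, Nat.mul_div_cancel_left _ four_pos]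
  · rw [show (2 * k + 1 + 1) / 2 = k + 1 by omega, show 2 * k + 1 - (k + 1) = k by omega,
      show (2 * k + 1) ^ 2 = 1 + 4 * ((k + 1) * k) by ring, Nat.add_mul_div_left _ _ four_pos]
    simp

section PartialOrder

variable {α : Type*} [PartialOrder α]

theorem isMin_iff_forall_le_imp_eq {a : α} : IsMin a ↔ ∀ b, b ≤ a → b = a :=
  ⟨fun h _ hb => h.eq_of_le hb, fun h b hb => (h b hb).ge⟩

theorem isMax_iff_forall_le_imp_eq {a : α} : IsMax a ↔ ∀ b, a ≤ b → b = a :=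
  ⟨fun h _ hb => h.eq_of_ge hb, fun h b hb => (h b hb).le⟩

theorem covBy_iff_le_and_ne_and_eq_or_eq {a b : α} :
    a ⋖ b ↔ a ≤ b ∧ a ≠ b ∧ ∀ c, a ≤ c → c ≤ b → c = a ∨ c = b := by
  rw [covBy_iff_lt_and_eq_or_eq, lt_iff_le_and_ne, and_assoc]

variable [Fintype α]

theorem card_isMin_add_card_isMax_le :
    Nat.card {a : α // IsMin a} + Nat.card {a : α // IsMax a} ≤
      Fintype.card α + Nat.card {a : α // IsMin a ∧ IsMax a} := by
  classical
  simp only [Nat.card_eq_fintype_card, Fintype.card_subtype, filter_and]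
  rw [← card_union_add_card_inter]
  gcongr
  exact card_le_univ _

theorem four_mul_card_covBy_le :
    4 * Nat.card {p : α × α // p.1 ⋖ p.2} ≤ Nat.card {a : α // ¬(IsMin a ∧ IsMax a)} ^ 2 := by
  classical
  let G := (hasse α).induce {a | ¬(IsMin a ∧ IsMax a)}
  let toEdge (p : {p : α × α // p.1 ⋖ p.2}) : G.edgeSet :=
    ⟨s(⟨p.1.1, fun h => p.2.lt.not_isMax h.2⟩, ⟨p.1.2, fun h => p.2.lt.not_isMin h.1⟩),
      Or.inl p.2⟩
  have toEdge_injective : Function.Injective toEdge := by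
    rintro ⟨⟨a, b⟩, hab⟩ ⟨⟨c, e⟩, hce⟩ h
    have h := congrArg Subtype.val h
    simp only [toEdge, Sym2.eq_iff, Subtype.mk.injEq] at h
    obtain ⟨rfl, rfl⟩ | ⟨rfl, rfl⟩ := h
    · rfl
    · exact (hab.lt.asymm hce.lt).elim
  calc 4 * Nat.card {p : α × α // p.1 ⋖ p.2}
      ≤ 4 * #G.edgeFinset := by
        gcongr
        rw [edgeFinset_card, ← Nat.card_eq_fintype_card]
        exact Nat.card_le_card_of_injective _ toEdge_injective
    _ ≤ _ := by
        rw [Nat.card_eq_fintype_card]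
        exact CliqueFree.four_mul_card_edgeFinset_le <|
          cliqueFree_hasse_three.comap (Embedding.induce _).isContained

theorem card_isMin_add_card_isMax_add_card_covBy_le (hα : 4 ≤ Fintype.card α) :
    Nat.card {a : α // IsMin a} + Nat.card {a : α // IsMax a} +
        Nat.card {p : α × α // p.1 ⋖ p.2} ≤
      Fintype.card α ^ 2 / 4 + Fintype.card α := by
  classical
  set n := Fintype.card α
  set i := Nat.card {a : α // IsMin a ∧ IsMax a}
  set c := Nat.card {p : α × α // p.1 ⋖ p.2}
  have hi : i ≤ n := by
    simpa only [i, n, Nat.card_eq_fintype_card] using Fintype.card_subtype_le _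
  have hc : 4 * c ≤ (n - i) ^ 2 := by
    have : Nat.card {a : α // ¬(IsMin a ∧ IsMax a)} = n - i := by
      simp only [i, n, Nat.card_eq_fintype_card, Fintype.card_subtype_compl]
    exact this ▸ four_mul_card_covBy_le
  have hci : 4 * (c + i) ≤ n ^ 2 := by
    obtain ⟨m, hm⟩ : ∃ m, n = m + i := ⟨n - i, by omega⟩
    rw [hm, Nat.add_sub_cancel] at hc
    rw [hm] at hα ⊢
    -- `(m + i)² - m² - 4 i = i (2 m + i - 4) ≥ 0` since `m + i ≥ 4`
    nlinarith
  have := card_isMin_add_card_isMax_le (α := α)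
  have : c + i ≤ n ^ 2 / 4 := (Nat.le_div_iff_mul_le four_pos).2 (by linarith)
  omega

end PartialOrder

abbrev IsPartialOrder.toPartialOrder {α : Type*} {r : α → α → Prop} (h : IsPartialOrder α r) :
    PartialOrder α where
  le := r
  le_refl := h.refl
  le_trans := h.trans
  le_antisymm := h.antisymm

/-- upper bound on the number of facets of an order polytope,
`m⋆(P) + m⋆(P) + |E(P)| ≤ ⌊(d+1)/2⌋·(d − ⌊(d+1)/2⌋) + d` for `d ≥ 5`. -/
theorem stmt_6 (d : ℕ) (hd : 5 ≤ d) (r : Fin d → Fin d → Prop)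
    (hpo : IsPartialOrder (Fin d) r) :
    Nat.card {a : Fin d // ∀ b, r b a → b = a} +
      Nat.card {a : Fin d // ∀ b, r a b → b = a} +
      Nat.card {p : Fin d × Fin d // covRel r p.1 p.2} ≤
    ((d + 1) / 2) * (d - (d + 1) / 2) + d := by
  let _ : PartialOrder (Fin d) := hpo.toPartialOrder
  have bound := card_isMin_add_card_isMax_add_card_covBy_le (α := Fin d)
    (by rw [Fintype.card_fin]; omega)
  simp only [isMin_iff_forall_le_imp_eq, isMax_iff_forall_le_imp_eq,
    covBy_iff_le_and_ne_and_eq_or_eq, Fintype.card_fin] at bound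
  rwa [Nat.ceil_half_mul_floor_half_eq]
end

section
/- For every d ≥ 5 and every finite poset P on [d], the number of maximal chains c(P) satisfies c(P) ≤ 3^k if d = 3k, c(P) ≤ 4·3^{k-1} if d = 3k+1, and c(P) ≤ 2·3^k if d = 3k+2. Moreover this bound is attained by some poset on [d]. -/
/-!
A maximal chain of a finite poset `P` starts at a minimal element `x` and continues as a maximal
chain of the strict up-set of `x`, which avoids all `a` minimal elements. By induction on `|P| = n`,
`c(P) ≤ a · g(n - a) ≤ g(n)`, where `g(n)` is the largest product of the parts of a composition
of `n`, because `g` satisfies `a · g(m) ≤ g(m + a)`. Conversely, stacking antichains whose sizes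
form an optimal composition gives a poset whose maximal chains are exactly the transversals of
the layers, so `c = g(n)`.
-/

/-- The largest product of the parts of a composition of `n`. -/
def maxChainBound : ℕ → ℕ
  | 0 => 1
  | 1 => 1
  | 2 => 2
  | 3 => 3
  | 4 => 4
  | n + 5 => 3 * maxChainBound (n + 2)

lemma maxChainBound_add_three {n : ℕ} (hn : 2 ≤ n) :
    maxChainBound (n + 3) = 3 * maxChainBound n := by
  obtain ⟨m, rfl⟩ := Nat.exists_eq_add_of_le' hn
  rfl

lemma maxChainBound_le_succ : ∀ n, maxChainBound n ≤ maxChainBound (n + 1)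
  | 0 | 1 | 2 | 3 | 4 => by decide
  | n + 5 => Nat.mul_le_mul_left 3 (maxChainBound_le_succ (n + 2))

lemma maxChainBound_mono : Monotone maxChainBound :=
  monotone_nat_of_le_succ maxChainBound_le_succ

lemma two_mul_maxChainBound_le : ∀ n, 2 * maxChainBound n ≤ maxChainBound (n + 2)
  | 0 | 1 | 2 | 3 | 4 => by decide
  | n + 5 => by
    have := two_mul_maxChainBound_le (n + 2)
    change 2 * (3 * _) ≤ 3 * _
    omega

lemma three_mul_maxChainBound_le : ∀ n, 3 * maxChainBound n ≤ maxChainBound (n + 3)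
  | 0 | 1 => by decide
  | n + 2 => (maxChainBound_add_three (by omega)).ge

lemma mul_maxChainBound_le (m : ℕ) :
    ∀ {a : ℕ}, 1 ≤ a → a * maxChainBound m ≤ maxChainBound (m + a)
  | 1, _ => by simpa using maxChainBound_le_succ m
  | 2, _ => two_mul_maxChainBound_le m
  | 3, _ => three_mul_maxChainBound_le m
  | a + 4, _ => calc
      (a + 4) * maxChainBound m ≤ 2 * ((a + 2) * maxChainBound m) := by
        rw [← mul_assoc]; exact Nat.mul_le_mul_right _ (by omega)
      _ ≤ 2 * maxChainBound (m + (a + 2)) :=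
        Nat.mul_le_mul_left 2 (mul_maxChainBound_le m (by omega))
      _ ≤ maxChainBound (m + (a + 4)) := two_mul_maxChainBound_le _

lemma maxChainBound_add_three_mul {n : ℕ} (hn : 2 ≤ n) :
    ∀ k, maxChainBound (n + 3 * k) = 3 ^ k * maxChainBound n
  | 0 => by simp
  | k + 1 => by
    rw [show n + 3 * (k + 1) = n + 3 * k + 3 by ring, maxChainBound_add_three (by omega),
      maxChainBound_add_three_mul hn k, pow_succ]
    ring

lemma maxChainBound_three_mul (k : ℕ) : maxChainBound (3 * k) = 3 ^ k := by
  cases k with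
  | zero => rfl
  | succ k =>
    rw [show 3 * (k + 1) = 3 + 3 * k by ring, maxChainBound_add_three_mul (by norm_num), pow_succ]
    rfl

lemma maxChainBound_three_mul_add_one {k : ℕ} (hk : 1 ≤ k) :
    maxChainBound (3 * k + 1) = 4 * 3 ^ (k - 1) := by
  obtain ⟨j, rfl⟩ := Nat.exists_eq_add_of_le' hk
  rw [show 3 * (j + 1) + 1 = 4 + 3 * j by ring, maxChainBound_add_three_mul (by norm_num)]
  simp [maxChainBound, mul_comm]

lemma maxChainBound_three_mul_add_two (k : ℕ) : maxChainBound (3 * k + 2) = 2 * 3 ^ k := by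
  rw [add_comm, maxChainBound_add_three_mul le_rfl, mul_comm]; rfl

lemma exists_list_sum_prod_eq_maxChainBound :
    ∀ d, ∃ l : List ℕ, (∀ n ∈ l, 0 < n) ∧ l.sum = d ∧ l.prod = maxChainBound d
  | 0 => ⟨[], by simp, rfl, rfl⟩
  | 1 => ⟨[1], by simp, rfl, rfl⟩
  | 2 => ⟨[2], by simp, rfl, rfl⟩
  | 3 => ⟨[3], by simp, rfl, rfl⟩
  | 4 => ⟨[4], by simp, rfl, rfl⟩
  | d + 5 =>
    have ⟨l, hl, hsum, hprod⟩ := exists_list_sum_prod_eq_maxChainBound (d + 2)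
    ⟨3 :: l, by simpa using hl, by simp [hsum]; ring, by simp [hprod, maxChainBound]⟩

section MaxChainIn
variable {α : Type*} [PartialOrder α] {s C : Set α} {x : α}

def IsMaxChainIn (s C : Set α) : Prop :=
  Maximal (fun D => D ⊆ s ∧ IsChain (· ≤ ·) D) C

lemma isMaxChainIn_univ : IsMaxChainIn Set.univ C ↔ IsMaxChain (· ≤ ·) C := by
  simp only [IsMaxChainIn, IsMaxChain, Maximal, Set.subset_univ, true_and]
  exact and_congr_right fun _ => forall₂_congr fun D _ =>
    ⟨fun h hCD => (h hCD).antisymm' hCD, fun h hCD => (h hCD).ge⟩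

lemma IsChain.exists_isLeast (hC : IsChain (· ≤ ·) C) (hfin : C.Finite) (hne : C.Nonempty) :
    ∃ x, IsLeast C x := by
  obtain ⟨x, hxC, hx⟩ := hfin.exists_minimal hne
  refine ⟨x, hxC, fun y hy => ?_⟩
  obtain rfl | hxy := eq_or_ne x y
  · exact le_rfl
  · exact (hC hxC hy hxy).elim id fun hyx => hx hy hyx

lemma IsMaxChainIn.nonempty (hC : IsMaxChainIn s C) (hs : s.Nonempty) : C.Nonempty := by
  obtain ⟨m, hm⟩ := hs
  by_contra h
  rw [Set.not_nonempty_iff_eq_empty] at h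
  subst h
  simpa using hC.2 ⟨Set.singleton_subset_iff.2 hm, IsChain.singleton⟩ (Set.empty_subset {m})

lemma IsMaxChainIn.minimal_of_isLeast (hC : IsMaxChainIn s C) (hx : IsLeast C x) :
    Minimal (· ∈ s) x := by
  refine ⟨hC.1.1 hx.1, fun y hy hyx => ?_⟩
  have hins : insert y C ⊆ C := hC.2
    ⟨Set.insert_subset hy hC.1.1, hC.1.2.insert fun z hz _ => .inl (hyx.trans (hx.2 hz))⟩
    (Set.subset_insert y C)
  exact hx.2 (hins (Set.mem_insert y C))

lemma IsMaxChainIn.diff_singleton_of_isLeast (hC : IsMaxChainIn s C) (hx : IsLeast C x) :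
    IsMaxChainIn (s ∩ Set.Ioi x) (C \ {x}) := by
  refine ⟨⟨fun y ⟨hyC, hyx⟩ => ⟨hC.1.1 hyC, lt_of_le_of_ne (hx.2 hyC) (Ne.symm hyx)⟩,
    hC.1.2.mono Set.sdiff_subset⟩, fun D ⟨hDs, hD⟩ hCD => ?_⟩
  have hxD : ∀ z ∈ D, x < z := fun z hz => (hDs hz).2
  have hins : insert x D ⊆ C := hC.2
    ⟨Set.insert_subset (hC.1.1 hx.1) fun z hz => (hDs hz).1,
      hD.insert fun z hz _ => .inl (hxD z hz).le⟩
    fun z hz => by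
      obtain rfl | hzx := eq_or_ne z x
      · exact Set.mem_insert z D
      · exact Set.mem_insert_of_mem x (hCD ⟨hz, hzx⟩)
  exact fun z hz => ⟨hins (Set.mem_insert_of_mem x hz), (hxD z hz).ne'⟩

variable [Finite α]

open Classical in
lemma card_isMaxChainIn_le_sum {s : Finset α} (hs : s.Nonempty) :
    Nat.card {C // IsMaxChainIn (s : Set α) C} ≤
      ∑ x ∈ s with Minimal (· ∈ (s : Set α)) x,
        Nat.card {D // IsMaxChainIn ((s : Set α) ∩ Set.Ioi x) D} := by
  set A := s.filter fun x => Minimal (· ∈ (s : Set α)) x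
  have hleast (C : {C // IsMaxChainIn (s : Set α) C}) : ∃ x, IsLeast C.1 x :=
    C.2.1.2.exists_isLeast (Set.toFinite _) (C.2.nonempty (by simpa using hs))
  choose least hleast using hleast
  let Φ (C : {C // IsMaxChainIn (s : Set α) C}) :
      Σ x : A, {D // IsMaxChainIn ((s : Set α) ∩ Set.Ioi x.1) D} :=
    ⟨⟨least C, Finset.mem_filter.2
        ⟨(hleast C).1 |> C.2.1.1, C.2.minimal_of_isLeast (hleast C)⟩⟩,
      ⟨C.1 \ {least C}, C.2.diff_singleton_of_isLeast (hleast C)⟩⟩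
  have hΦ : Φ.Injective := by
    intro C C' h
    have hx : least C = least C' := congrArg (fun p => p.1.1) h
    have hD : C.1 \ {least C} = C'.1 \ {least C'} := congrArg (fun p => p.2.1) h
    have hins (C : {C // IsMaxChainIn (s : Set α) C}) :
        insert (least C) (C.1 \ {least C}) = C.1 := by
      rw [Set.insert_sdiff_singleton, Set.insert_eq_of_mem (hleast C).1]
    have := congrArg (insert (least C)) hD
    rw [hins, hx, hins] at this
    exact Subtype.ext this
  calc Nat.card {C // IsMaxChainIn (s : Set α) C}
      ≤ Nat.card (Σ x : A, {D // IsMaxChainIn ((s : Set α) ∩ Set.Ioi x.1) D}) :=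
        Nat.card_le_card_of_injective Φ hΦ
    _ = ∑ x : A, Nat.card {D // IsMaxChainIn ((s : Set α) ∩ Set.Ioi x.1) D} := Nat.card_sigma
    _ = _ :=
      Finset.sum_coe_sort A fun x => Nat.card {D // IsMaxChainIn ((s : Set α) ∩ Set.Ioi x) D}

lemma card_isMaxChainIn_le (s : Finset α) :
    Nat.card {C // IsMaxChainIn (s : Set α) C} ≤ maxChainBound s.card := by
  classical
  induction s using Finset.strongInduction with
  | H s ih =>
  obtain rfl | hs := s.eq_empty_or_nonempty
  · have hempty (C : {C // IsMaxChainIn ((∅ : Finset α) : Set α) C}) : C.1 = ∅ := by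
      simpa using C.2.1.1
    exact Finite.card_le_one_iff_subsingleton.2
      ⟨fun C D => Subtype.ext ((hempty C).trans (hempty D).symm)⟩
  set A := s.filter fun x => Minimal (· ∈ (s : Set α)) x
  have hA : A.Nonempty := by
    obtain ⟨x, hx⟩ := (s : Set α).toFinite.exists_minimal (by simpa using hs)
    exact ⟨x, Finset.mem_filter.2 ⟨hx.1, hx⟩⟩
  have hAs : A ⊆ s := Finset.filter_subset _ _
  have hup (x) (hx : x ∈ A) :
      Nat.card {D // IsMaxChainIn ((s : Set α) ∩ Set.Ioi x) D} ≤
        maxChainBound (s.card - A.card) := by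
    have hxs := (Finset.mem_filter.1 hx).1
    have hcoe : ((s : Set α) ∩ Set.Ioi x : Set α) = ↑(s.filter (x < ·)) := by ext; simp
    rw [hcoe]
    refine (ih _ (Finset.filter_ssubset.2 ⟨x, hxs, lt_irrefl x⟩)).trans (maxChainBound_mono ?_)
    rw [← Finset.card_sdiff_of_subset hAs]
    refine Finset.card_le_card fun y hy => ?_
    obtain ⟨hys, hxy⟩ := Finset.mem_filter.1 hy
    exact Finset.mem_sdiff.2 ⟨hys, fun hyA => (Finset.mem_filter.1 hyA).2.not_lt hxs hxy⟩
  calc Nat.card {C // IsMaxChainIn (s : Set α) C}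
      ≤ ∑ x ∈ A, Nat.card {D // IsMaxChainIn ((s : Set α) ∩ Set.Ioi x) D} :=
        card_isMaxChainIn_le_sum hs
    _ ≤ ∑ x ∈ A, maxChainBound (s.card - A.card) := Finset.sum_le_sum hup
    _ = A.card * maxChainBound (s.card - A.card) := by rw [Finset.sum_const, smul_eq_mul]
    _ ≤ maxChainBound (s.card - A.card + A.card) := mul_maxChainBound_le _ hA.card_pos
    _ = maxChainBound s.card := by rw [Nat.sub_add_cancel (Finset.card_le_card hAs)]

theorem card_isMaxChain_le :
    Nat.card {C : Set α // IsMaxChain (· ≤ ·) C} ≤ maxChainBound (Nat.card α) := by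
  have := Fintype.ofFinite α
  simpa [isMaxChainIn_univ, Finset.coe_univ] using card_isMaxChainIn_le (Finset.univ : Finset α)

end MaxChainIn

section Layered
variable {α β : Type*} (f : α → β)

/-- The ordinal sum of the fibres of `f`, each an antichain, stacked along `β`. -/
def layeredLE [LT β] (x y : α) : Prop := x = y ∨ f x < f y

lemma isPartialOrder_layeredLE [Preorder β] : IsPartialOrder α (layeredLE f) where
  refl _ := .inl rfl
  trans _ _ _
    | .inl rfl, h => h
    | .inr h, .inl rfl => .inr h
    | .inr h, .inr h' => .inr (h.trans h')
  antisymm _ _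
    | .inl h, _ => h
    | .inr _, .inl h => h.symm
    | .inr h, .inr h' => (h.asymm h').elim

lemma card_bijOn_univ_eq_prod_card_fiber [Fintype β] :
    Nat.card {C : Set α // Set.BijOn f C Set.univ} = ∏ b, Nat.card {x // f x = b} := by
  let Φ (g : ∀ b, {x // f x = b}) : {C : Set α // Set.BijOn f C Set.univ} :=
    ⟨Set.range fun b => (g b).1, Set.mapsTo_univ _ _,
      by rintro _ ⟨b, rfl⟩ _ ⟨b', rfl⟩ h; rw [(g b).2, (g b').2] at h; rw [h],
      fun b _ => ⟨g b, ⟨b, rfl⟩, (g b).2⟩⟩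
  have hΦ : Φ.Bijective := by
    refine ⟨fun g g' h => funext fun b => ?_, fun ⟨C, hC⟩ => ?_⟩
    · have hrange : (Set.range fun b => (g b).1) = Set.range fun b => (g' b).1 :=
        congrArg Subtype.val h
      obtain ⟨b', hb'⟩ : (g b).1 ∈ Set.range fun b => (g' b).1 := hrange ▸ ⟨b, rfl⟩
      have : b' = b := by simpa [hb', (g b).2] using (g' b').2.symm
      exact Subtype.ext (this ▸ hb').symm
    · choose x hxC hx using fun b => hC.surjOn (Set.mem_univ b)
      refine ⟨fun b => ⟨x b, hx b⟩, Subtype.ext ?_⟩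
      refine (Set.range_subset_iff.2 hxC).antisymm fun y hy => ⟨f y, ?_⟩
      exact hC.injOn (hxC _) hy (hx _)
  rw [← Nat.card_eq_of_bijective Φ hΦ, Nat.card_pi]

variable [LinearOrder β] {f} {C : Set α}

lemma isChain_layeredLE_iff : IsChain (layeredLE f) C ↔ C.InjOn f := by
  refine ⟨fun h x hx y hy hxy => by_contra fun hne => ?_, fun h x hx y hy hne => ?_⟩
  · rcases h hx hy hne with (h | h) | (h | h)
    exacts [hne h, h.ne hxy, hne h.symm, h.ne' hxy]
  · rcases lt_or_gt_of_ne ((h.ne_iff hx hy).2 hne) with h | h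
    exacts [.inl (.inr h), .inr (.inr h)]

lemma isMaxChain_layeredLE_iff (hf : f.Surjective) :
    IsMaxChain (layeredLE f) C ↔ Set.BijOn f C Set.univ := by
  simp only [IsMaxChain, isChain_layeredLE_iff]
  refine ⟨fun ⟨hinj, hmax⟩ => ⟨Set.mapsTo_univ f C, hinj, fun b _ => ?_⟩,
    fun h => ⟨h.injOn, fun D hD hCD => hCD.antisymm fun y hy => ?_⟩⟩
  · by_contra hb
    obtain ⟨x, rfl⟩ := hf b
    have hx : x ∉ C := fun hx => hb ⟨x, hx, rfl⟩
    have := hmax ((Set.injOn_insert hx).2 ⟨hinj, hb⟩) (Set.subset_insert x C)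
    exact hx (this ▸ Set.mem_insert x C)
  · obtain ⟨x, hx, hxy⟩ := h.surjOn (Set.mem_univ (f y))
    exact hD (hCD hx) hy hxy ▸ hx

lemma card_isMaxChain_layeredLE [Fintype β] (hf : f.Surjective) :
    Nat.card {C : Set α // IsMaxChain (layeredLE f) C} = ∏ b, Nat.card {x // f x = b} := by
  simp only [isMaxChain_layeredLE_iff hf, card_bijOn_univ_eq_prod_card_fiber]

end Layered

lemma exists_isPartialOrder_card_isMaxChain_eq_prod {d : ℕ} (l : List ℕ)
    (hl : ∀ n ∈ l, 0 < n) (hsum : l.sum = d) :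
    ∃ r : Fin d → Fin d → Prop, IsPartialOrder (Fin d) r ∧
      Nat.card {C : Set (Fin d) // IsMaxChain r C} = l.prod := by
  have hcard : Fintype.card (Σ i : Fin l.length, Fin l[i]) = d := by
    simp [Fin.sum_univ_getElem, hsum]
  let e : Fin d ≃ Σ i : Fin l.length, Fin l[i] := (Fintype.equivFinOfCardEq hcard).symm
  let f (x : Fin d) : Fin l.length := (e x).1
  have hf : f.Surjective := fun i => ⟨e.symm ⟨i, 0, hl _ (List.getElem_mem _)⟩, by simp [f]⟩
  refine ⟨layeredLE f, isPartialOrder_layeredLE f, ?_⟩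
  rw [card_isMaxChain_layeredLE hf, ← Fin.prod_univ_getElem]
  refine Finset.prod_congr rfl fun i _ => ?_
  rw [Nat.card_congr ((e.subtypeEquiv fun _ => Iff.rfl).trans (Equiv.sigmaSubtype i))]
  simp

lemma exists_isPartialOrder_card_isMaxChain_eq_maxChainBound (d : ℕ) :
    ∃ r : Fin d → Fin d → Prop, IsPartialOrder (Fin d) r ∧
      Nat.card {C : Set (Fin d) // IsMaxChain r C} = maxChainBound d := by
  obtain ⟨l, hl, hsum, hprod⟩ := exists_list_sum_prod_eq_maxChainBound d
  exact hprod ▸ exists_isPartialOrder_card_isMaxChain_eq_prod l hl hsum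

abbrev partialOrderOfIsPartialOrder {α : Type*} (r : α → α → Prop) [IsPartialOrder α r] :
    PartialOrder α where
  le := r
  le_refl := refl_of r
  le_trans _ _ _ := trans_of r
  le_antisymm _ _ := antisymm_of r

/-- for `d ≥ 5`, the number of maximal chains of any poset on `[d]` is
at most `3^k`, `4·3^(k-1)`, `2·3^k` according to `d = 3k, 3k+1, 3k+2`, and this
bound is attained by some poset on `[d]`. -/
theorem stmt_8 (d k : ℕ) (hd : 5 ≤ d) :
    (∀ r : Fin d → Fin d → Prop, IsPartialOrder (Fin d) r →
      (d = 3 * k → Nat.card {C : Set (Fin d) // IsMaxChain r C} ≤ 3 ^ k) ∧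
      (d = 3 * k + 1 → Nat.card {C : Set (Fin d) // IsMaxChain r C} ≤ 4 * 3 ^ (k - 1)) ∧
      (d = 3 * k + 2 → Nat.card {C : Set (Fin d) // IsMaxChain r C} ≤ 2 * 3 ^ k)) ∧
    (∃ r : Fin d → Fin d → Prop, IsPartialOrder (Fin d) r ∧
      (d = 3 * k → Nat.card {C : Set (Fin d) // IsMaxChain r C} = 3 ^ k) ∧
      (d = 3 * k + 1 → Nat.card {C : Set (Fin d) // IsMaxChain r C} = 4 * 3 ^ (k - 1)) ∧
      (d = 3 * k + 2 → Nat.card {C : Set (Fin d) // IsMaxChain r C} = 2 * 3 ^ k)) := by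
  have h₀ : d = 3 * k → maxChainBound d = 3 ^ k := by
    rintro rfl; exact maxChainBound_three_mul k
  have h₁ : d = 3 * k + 1 → maxChainBound d = 4 * 3 ^ (k - 1) := by
    rintro rfl; exact maxChainBound_three_mul_add_one (by omega)
  have h₂ : d = 3 * k + 2 → maxChainBound d = 2 * 3 ^ k := by
    rintro rfl; exact maxChainBound_three_mul_add_two k
  refine ⟨fun r hr => ?_, ?_⟩
  · have hle : Nat.card {C : Set (Fin d) // IsMaxChain r C} ≤ maxChainBound d := by
      have := @card_isMaxChain_le (Fin d) (partialOrderOfIsPartialOrder r) _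
      rwa [Nat.card_fin] at this
    exact ⟨fun h => h₀ h ▸ hle, fun h => h₁ h ▸ hle, fun h => h₂ h ▸ hle⟩
  · obtain ⟨r, hr, hcard⟩ := exists_isPartialOrder_card_isMaxChain_eq_maxChainBound d
    exact ⟨r, hr, fun h => hcard.trans (h₀ h), fun h => hcard.trans (h₁ h),
      fun h => hcard.trans (h₂ h)⟩
end

section
/- Let P be the chain 1 ≺ 2 ≺ … ≺ d and ℓ any edge partition of its d−1 cover relations into sets oE(P) and cE(P). Then the order-chain polytope OC_ℓ(P) = O(P'_ℓ) ∩ C(P''_ℓ) is unimodularly equivalent (via an affine lattice isomorphism of ℤ^d) to the chain polytope C(Q) of some zigzag poset Q on [d]. -/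
/-- The partial order generated by a set of (cover) relations `e`. -/
def genOrd {d : ℕ} (e : Fin d → Fin d → Prop) : Fin d → Fin d → Prop :=
  Relation.ReflTransGen e

/-- The order polytope of a partial order `r` on `Fin d`. -/
def orderPolytope {d : ℕ} (r : Fin d → Fin d → Prop) : Set (Fin d → ℝ) :=
  {x | (∀ i, 0 ≤ x i ∧ x i ≤ 1) ∧ ∀ i j, r i j → x j ≤ x i}

/-- The chain polytope of a partial order `r` on `Fin d`. -/
def chainPolytope {d : ℕ} (r : Fin d → Fin d → Prop) : Set (Fin d → ℝ) :=
  {x | (∀ i, 0 ≤ x i) ∧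
    ∀ C : Finset (Fin d), IsMaxChain r (C : Set (Fin d)) → ∑ i ∈ C, x i ≤ 1}

namespace Stmt13

variable (d : ℕ) (ℓ : ℕ → Bool)

/-- direction flip between edge `k` and edge `k+1`. -/
def flp (k : ℕ) : Bool := ℓ k && !ℓ (k+1)

/-- direction of edge `k` in the zigzag. -/
def dirf : ℕ → Bool
  | 0 => true
  | (k+1) => if flp ℓ k then !(dirf k) else dirf k

/-- start of the maximal false-edge run below `i`. -/
def fStart : ℕ → ℕ
  | 0 => 0
  | (j+1) => if ℓ j = false then fStart j else j+1

/-- start of the maximal true-edge run below `i`. -/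
def tStart : ℕ → ℕ
  | 0 => 0
  | (j+1) => if ℓ j = true then tStart j else j+1

/-- end of the maximal true-edge run above `i` (inside `[0,d)`). -/
def tEnd (i : ℕ) : ℕ :=
  if h : i + 1 < d ∧ ℓ i = true then tEnd (i+1) else i
  termination_by d - i
  decreasing_by exact Nat.sub_lt_sub_left (Nat.lt_of_succ_lt h.1) (Nat.lt_succ_self i)

/-- end of the maximal false-edge run above `i` (inside `[0,d)`). -/
def fEnd (i : ℕ) : ℕ :=
  if h : i + 1 < d ∧ ℓ i = false then fEnd (i+1) else i
  termination_by d - i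
  decreasing_by exact Nat.sub_lt_sub_left (Nat.lt_of_succ_lt h.1) (Nat.lt_succ_self i)

def upTo (a b : ℕ) : Prop := ∀ k, a ≤ k → k < b → dirf ℓ k = true
def dnTo (a b : ℕ) : Prop := ∀ k, a ≤ k → k < b → dirf ℓ k = false

/-- the zigzag partial order. -/
def Q (a b : Fin d) : Prop :=
  a = b ∨ (a.val < b.val ∧ upTo ℓ a.val b.val) ∨ (b.val < a.val ∧ dnTo ℓ b.val a.val)

/-- comparability. -/
def cmp' (r : Fin d → Fin d → Prop) (a b : Fin d) : Prop := r a b ∨ r b a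

/-- maximal-interval conditions. -/
def mint (r : Fin d → Fin d → Prop) (s t : Fin d) : Prop :=
  s ≤ t ∧ cmp' d r s t ∧ (∀ u, u < s → ¬ cmp' d r u t) ∧ (∀ u, t < u → ¬ cmp' d r s u)

/-- sum of `y` over indices in `[a, b)`. -/
def nsum (y : Fin d → ℝ) (a b : ℕ) : ℝ :=
  ∑ k ∈ Finset.Ico a b, if h : k < d then y ⟨k, h⟩ else 0

/-- the unimodular transformation. -/
def Tm (x : Fin d → ℝ) (i : Fin d) : ℝ :=
  if h : i.val + 1 < d ∧ ℓ i.val = true then x i - x ⟨i.val + 1, h.1⟩ else x i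

/-- inverse transformation. -/
def invTm (y : Fin d → ℝ) (i : ℕ) : ℝ :=
  (if h2 : i < d then y ⟨i, h2⟩ else 0) +
    (if h : i + 1 < d ∧ ℓ i = true then invTm y (i+1) else 0)
  termination_by d - i
  decreasing_by exact Nat.sub_lt_sub_left (Nat.lt_of_succ_lt h.1) (Nat.lt_succ_self i)

/-- the matrix. -/
def Amat : Matrix (Fin d) (Fin d) ℤ :=
  Matrix.of fun i j => if j = i then 1 else if j.val = i.val + 1 ∧ ℓ i.val = true then -1 else 0


def pre (s m t : ℕ) : Prop :=
  s ≤ m ∧ m ≤ t ∧ t < d ∧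
  (∀ k, s ≤ k → k < m → ℓ k = false) ∧
  (∀ k, m ≤ k → k < t → ℓ k = true) ∧
  (s = 0 ∨ (s < m ∧ ℓ (s-1) = true)) ∧
  (t + 1 = d ∨ ℓ t = false) ∧
  (m = t → t + 1 = d)

variable {d ℓ}

lemma Q_refl (a : Fin d) : Q d ℓ a a := Or.inl rfl

lemma cmpQ_of_const {a b : Fin d} (hab : a ≤ b)
    (h : ∀ k, a.val ≤ k → k < b.val → dirf ℓ k = dirf ℓ a.val) : cmp' d (Q d ℓ) a b := by
  rcases eq_or_lt_of_le hab with rfl | hlt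
  · exact Or.inl (Q_refl a)
  · have hlt' : a.val < b.val := hlt
    cases hdir : dirf ℓ a.val with
    | true => exact Or.inl (Or.inr (Or.inl ⟨hlt', fun k hk1 hk2 => (h k hk1 hk2).trans hdir⟩))
    | false => exact Or.inr (Or.inr (Or.inr ⟨hlt', fun k hk1 hk2 => (h k hk1 hk2).trans hdir⟩))

lemma const_of_cmpQ {a b : Fin d} (hab : a ≤ b) (h : cmp' d (Q d ℓ) a b) :
    ∀ k, a.val ≤ k → k < b.val → dirf ℓ k = dirf ℓ a.val := by
  intro k hk1 hk2
  have hlt : a.val < b.val := lt_of_le_of_lt hk1 hk2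
  have ha : a.val ≤ a.val := le_refl _
  rcases h with h | h
  · rcases h with rfl | h
    · omega
    rcases h with ⟨_, hup⟩ | ⟨hba, _⟩
    · rw [hup k hk1 hk2, hup a.val ha hlt]
    · omega
  · rcases h with heq | h
    · rw [heq] at hlt; omega
    rcases h with ⟨hba, _⟩ | ⟨_, hdn⟩
    · omega
    · rw [hdn k hk1 hk2, hdn a.val ha hlt]

lemma cmpQ_symm {a b : Fin d} (h : cmp' d (Q d ℓ) a b) : cmp' d (Q d ℓ) b a := h.symm

lemma cmpQ_convex {a b c : Fin d} (hab : a ≤ b) (hbc : b ≤ c) (h : cmp' d (Q d ℓ) a c) :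
    cmp' d (Q d ℓ) a b ∧ cmp' d (Q d ℓ) b c := by
  have hconst := const_of_cmpQ (le_trans hab hbc) h
  constructor
  · exact cmpQ_of_const hab (fun k h1 h2 => hconst k h1 (lt_of_lt_of_le h2 hbc))
  · refine cmpQ_of_const hbc (fun k h1 h2 => ?_)
    rcases eq_or_lt_of_le hab with rfl | hlt
    · exact hconst k h1 h2
    · rw [hconst k (le_trans (le_of_lt hlt) h1) h2,
        hconst b.val (le_of_lt hlt) (lt_of_le_of_lt h1 h2)]

lemma Q_trans {a b c : Fin d} (h1 : Q d ℓ a b) (h2 : Q d ℓ b c) : Q d ℓ a c := by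
  rcases h1 with rfl | h1
  · exact h2
  rcases h2 with rfl | h2
  · exact Or.inr h1
  rcases h1 with ⟨hab, hup1⟩ | ⟨hba, hdn1⟩ <;> rcases h2 with ⟨hbc, hup2⟩ | ⟨hcb, hdn2⟩
  · exact Or.inr (Or.inl ⟨lt_trans hab hbc, fun k hk1 hk2 => by
      rcases lt_or_ge k b.val with h | h
      exacts [hup1 k hk1 h, hup2 k h hk2]⟩)
  · exfalso
    have hb1 : b.val ≠ 0 := by omega
    obtain ⟨m, hm⟩ := Nat.exists_eq_succ_of_ne_zero hb1
    have := hup1 m (by omega) (by omega)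
    have := hdn2 m (by omega) (by omega)
    simp_all
  · exfalso
    have := hdn1 b.val (le_refl _) hba
    have := hup2 b.val (le_refl _) hbc
    simp_all
  · exact Or.inr (Or.inr ⟨lt_trans hcb hba, fun k hk1 hk2 => by
      rcases lt_or_ge k b.val with h | h
      exacts [hdn2 k hk1 h, hdn1 k h hk2]⟩)

lemma Q_antisymm {a b : Fin d} (h1 : Q d ℓ a b) (h2 : Q d ℓ b a) : a = b := by
  rcases h1 with rfl | h1
  · rfl
  rcases h2 with rfl | h2
  · rfl
  exfalso
  rcases h1 with ⟨hab, hu1⟩ | ⟨hba, hd1⟩ <;> rcases h2 with ⟨hba', hu2⟩ | ⟨hab', hd2⟩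
  · omega
  · have := hu1 a.val (le_refl _) hab
    have := hd2 a.val (le_refl _) hab
    simp_all
  · have := hd1 b.val (le_refl _) hba
    have := hu2 b.val (le_refl _) hba
    simp_all
  · omega


section MaxChain
variable {r : Fin d → Fin d → Prop}

lemma cmp_in_Icc (hrefl : ∀ a, r a a)
    (hconv : ∀ a b c : Fin d, a ≤ b → b ≤ c → cmp' d r a c → cmp' d r a b ∧ cmp' d r b c)
    {s t a b : Fin d} (hst : cmp' d r s t) (hsa : s ≤ a) (hat : a ≤ t) (hsb : s ≤ b)
    (hbt : b ≤ t) : cmp' d r a b := by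
  have key : ∀ u v : Fin d, u ≤ v → s ≤ u → v ≤ t → cmp' d r u v := by
    intro u v huv hsu hvt
    have h1 := (hconv s u t hsu (le_trans huv hvt) hst).2
    exact (hconv u v t huv hvt h1).1
  rcases le_total a b with h | h
  · exact key a b h hsa hbt
  · exact (key b a h hsb hat).symm

lemma maxChain_iff (hrefl : ∀ a, r a a)
    (hconv : ∀ a b c : Fin d, a ≤ b → b ≤ c → cmp' d r a c → cmp' d r a b ∧ cmp' d r b c)
    (hd : 0 < d) (C : Set (Fin d)) :
    IsMaxChain r C ↔ ∃ s t : Fin d, mint d r s t ∧ C = Set.Icc s t := by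
  constructor
  · rintro ⟨hchain, hmax⟩
    -- C is nonempty
    have hne : C.Nonempty := by
      by_contra hne
      rw [Set.not_nonempty_iff_eq_empty] at hne
      subst hne
      have h1 : IsChain r {(⟨0, hd⟩ : Fin d)} := Set.Subsingleton.isChain (by simp)
      have := hmax h1 (Set.empty_subset _)
      exact Set.singleton_ne_empty _ this.symm
    have hfin : C.Finite := Set.toFinite C
    set F := hfin.toFinset with hF
    have hFne : F.Nonempty := by rwa [hF, Set.Finite.toFinset_nonempty]
    set s := F.min' hFne with hs
    set t := F.max' hFne with ht
    have hsC : s ∈ C := hfin.mem_toFinset.mp (F.min'_mem hFne)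
    have htC : t ∈ C := hfin.mem_toFinset.mp (F.max'_mem hFne)
    have hbound : ∀ y ∈ C, s ≤ y ∧ y ≤ t := by
      intro y hy
      have hyF : y ∈ F := by rwa [hF, Set.Finite.mem_toFinset]
      exact ⟨F.min'_le y hyF, F.le_max' y hyF⟩
    have hcmpC : ∀ a b, a ∈ C → b ∈ C → cmp' d r a b := by
      intro a b ha hb
      rcases eq_or_ne a b with rfl | hne'
      · exact Or.inl (hrefl a)
      · exact hchain ha hb hne'
    have hst : cmp' d r s t := hcmpC s t hsC htC
    have hins : ∀ u : Fin d, (∀ y ∈ C, cmp' d r u y) → u ∈ C := by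
      intro u hu
      have hchain' : IsChain r (insert u C) := by
        apply hchain.insert
        intro b hb hne'
        exact hu b hb
      have := hmax hchain' (Set.subset_insert u C)
      rw [this]; exact Set.mem_insert u C
    have hstle : s ≤ t := (hbound s hsC).2
    refine ⟨s, t, ⟨hstle, hst, ?_, ?_⟩, ?_⟩
    · intro u hu hcmp
      have huC : u ∈ C := by
        apply hins
        intro y hy
        exact cmp_in_Icc hrefl hconv hcmp (le_refl u) (le_trans (le_of_lt hu) hstle)
          (le_trans (le_of_lt hu) (hbound y hy).1) (hbound y hy).2
      exact absurd (hbound u huC).1 (not_le_of_gt hu)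
    · intro u hu hcmp
      have huC : u ∈ C := by
        apply hins
        intro y hy
        exact cmp_in_Icc hrefl hconv hcmp (le_trans hstle (le_of_lt hu)) (le_refl u)
          (hbound y hy).1 (le_trans (hbound y hy).2 (le_of_lt hu))
      exact absurd (hbound u huC).2 (not_le_of_gt hu)
    · apply Set.Subset.antisymm
      · intro y hy
        exact ⟨(hbound y hy).1, (hbound y hy).2⟩
      · intro u hu
        apply hins
        intro y hy
        exact cmp_in_Icc hrefl hconv hst hu.1 hu.2 (hbound y hy).1 (hbound y hy).2
  · rintro ⟨s, t, ⟨hstle, hst, hbot, htop⟩, rfl⟩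
    constructor
    · intro a ha b hb hne'
      exact cmp_in_Icc hrefl hconv hst ha.1 ha.2 hb.1 hb.2
    · intro C' hC' hsub
      apply Set.Subset.antisymm hsub
      intro x hx
      have hsC' : s ∈ C' := hsub ⟨le_refl s, hstle⟩
      have htC' : t ∈ C' := hsub ⟨hstle, le_refl t⟩
      have hcmp : ∀ a b : Fin d, a ∈ C' → b ∈ C' → cmp' d r a b := by
        intro a b ha hb
        rcases eq_or_ne a b with rfl | hne'
        · exact Or.inl (hrefl a)
        · exact hC' ha hb hne'
      rcases lt_or_ge x s with h | h1
      · exact absurd (hcmp x t hx htC') (hbot x h)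
      rcases lt_or_ge t x with h | h2
      · exact absurd (hcmp s x hsC' hx) (htop x h)
      exact ⟨h1, h2⟩

end MaxChain

section ClosedForm

lemma Rpp_iff (a b : Fin d) :
    genOrd (fun a b : Fin d => a.val + 1 = b.val ∧ ℓ a.val = false) a b ↔
      a = b ∨ (a.val < b.val ∧ ∀ k, a.val ≤ k → k < b.val → ℓ k = false) := by
  constructor
  · intro h
    induction h with
    | refl => exact Or.inl rfl
    | @tail b c hab step ih =>
      obtain ⟨hc, hb⟩ := step
      rcases ih with rfl | ⟨h1, h2⟩
      · right
        refine ⟨by omega, fun k hk1 hk2 => ?_⟩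
        have hk : k = a.val := by omega
        rw [hk]; exact hb
      · right
        refine ⟨by omega, fun k hk1 hk2 => ?_⟩
        rcases lt_or_ge k b.val with h | h
        · exact h2 k hk1 h
        · have hk : k = b.val := by omega
          rw [hk]; exact hb
  · intro h
    rcases h with rfl | ⟨h1, h2⟩
    · exact Relation.ReflTransGen.refl
    · have key : ∀ n (b : Fin d), b.val = a.val + n →
          (∀ k, a.val ≤ k → k < b.val → ℓ k = false) →
          genOrd (fun a b : Fin d => a.val + 1 = b.val ∧ ℓ a.val = false) a b := by
        intro n
        induction n with
        | zero => intro b hb _; have : a = b := Fin.ext (by omega); rw [← this]; exact Relation.ReflTransGen.refl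
        | succ n ih =>
          intro b hb hall
          have hb' : a.val + n < d := by omega
          have ihb := ih ⟨a.val + n, hb'⟩ rfl (fun k hk1 hk2 => hall k hk1 (by simp at hk2; omega))
          exact Relation.ReflTransGen.tail ihb ⟨by simp; omega, hall (a.val + n) (by omega) (by omega)⟩
      exact key (b.val - a.val) b (by omega) h2

lemma cmpC_iff {a b : Fin d} (hab : a ≤ b) :
    cmp' d (genOrd (fun a b : Fin d => a.val + 1 = b.val ∧ ℓ a.val = false)) a b ↔
      (∀ k, a.val ≤ k → k < b.val → ℓ k = false) := by
  constructor
  · intro h k hk1 hk2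
    rcases h with h | h <;> rw [Rpp_iff] at h
    · rcases h with rfl | ⟨h1, h2⟩
      · omega
      · exact h2 k hk1 hk2
    · rcases h with heq | ⟨h1, h2⟩
      · subst heq; omega
      · have : b.val ≤ a.val := le_of_lt h1
        have : a.val < a.val := by have := Fin.le_def.mp hab; omega
        omega
  · intro h
    left
    rw [Rpp_iff]
    rcases eq_or_lt_of_le hab with rfl | hlt
    · exact Or.inl rfl
    · exact Or.inr ⟨hlt, h⟩

lemma cmpC_convex {a b c : Fin d} (hab : a ≤ b) (hbc : b ≤ c)
    (h : cmp' d (genOrd (fun a b : Fin d => a.val + 1 = b.val ∧ ℓ a.val = false)) a c) :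
    cmp' d (genOrd (fun a b : Fin d => a.val + 1 = b.val ∧ ℓ a.val = false)) a b ∧
      cmp' d (genOrd (fun a b : Fin d => a.val + 1 = b.val ∧ ℓ a.val = false)) b c := by
  rw [cmpC_iff (le_trans hab hbc)] at h
  rw [cmpC_iff hab, cmpC_iff hbc]
  have hbc' := Fin.le_def.mp hbc
  have hab' := Fin.le_def.mp hab
  exact ⟨fun k h1 h2 => h k h1 (by omega), fun k h1 h2 => h k (by omega) h2⟩

lemma mem_orderPolytope_iff (x : Fin d → ℝ) :
    x ∈ orderPolytope (genOrd fun a b : Fin d => a.val + 1 = b.val ∧ ℓ a.val = true) ↔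
      ((∀ i, 0 ≤ x i ∧ x i ≤ 1) ∧
        ∀ j, (h : j + 1 < d) → ℓ j = true → x ⟨j+1, h⟩ ≤ x ⟨j, Nat.lt_of_succ_lt h⟩) := by
  constructor
  · rintro ⟨h1, h2⟩
    exact ⟨h1, fun j h hj => h2 ⟨j, Nat.lt_of_succ_lt h⟩ ⟨j+1, h⟩
      (Relation.ReflTransGen.single ⟨rfl, hj⟩)⟩
  · rintro ⟨h1, h2⟩
    refine ⟨h1, fun i j hij => ?_⟩
    induction hij with
    | refl => exact le_refl _
    | @tail b c hab step ih =>
      obtain ⟨hc, hb⟩ := step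
      have hbd : b.val + 1 < d := by rw [hc]; exact c.isLt
      have hcb : c = ⟨b.val + 1, hbd⟩ := Fin.ext (by simp [← hc])
      calc x c ≤ x b := by rw [hcb]; exact h2 b.val hbd hb
        _ ≤ x i := ih

end ClosedForm

section Runs

lemma tEnd_ge (i : ℕ) : i ≤ tEnd d ℓ i := by
  have H : ∀ n i, d - i ≤ n → i ≤ tEnd d ℓ i := by
    intro n
    induction n with
    | zero =>
      intro i h; rw [tEnd]; split
      · rename_i h2; omega
      · exact le_refl i
    | succ n ih =>
      intro i h; rw [tEnd]; split
      · rename_i h2; exact le_trans (Nat.le_succ i) (ih (i+1) (by omega))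
      · exact le_refl i
  exact H (d - i) i (le_refl _)

lemma tEnd_lt {i : ℕ} (h : i < d) : tEnd d ℓ i < d := by
  have H : ∀ n i, d - i ≤ n → i < d → tEnd d ℓ i < d := by
    intro n
    induction n with
    | zero => intro i h1 h2; rw [tEnd]; split
              · rename_i h3; omega
              · exact h2
    | succ n ih => intro i h1 h2; rw [tEnd]; split
                   · rename_i h3; exact ih (i+1) (by omega) h3.1
                   · exact h2
  exact H (d - i) i (le_refl _) h

lemma tEnd_true {i : ℕ} : ∀ k, i ≤ k → k < tEnd d ℓ i → ℓ k = true := by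
  have H : ∀ n i, d - i ≤ n → ∀ k, i ≤ k → k < tEnd d ℓ i → ℓ k = true := by
    intro n
    induction n with
    | zero =>
      intro i h k hk1 hk2
      rw [tEnd] at hk2; split at hk2
      · rename_i h3; omega
      · omega
    | succ n ih =>
      intro i h k hk1 hk2
      rw [tEnd] at hk2; split at hk2
      · rename_i h3
        rcases eq_or_lt_of_le hk1 with rfl | hlt
        · exact h3.2
        · exact ih (i+1) (by omega) k hlt hk2
      · omega
  exact H (d - i) i (le_refl _)

lemma tEnd_stop {i : ℕ} (h : tEnd d ℓ i + 1 < d) : ℓ (tEnd d ℓ i) = false := by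
  have H : ∀ n i, d - i ≤ n → tEnd d ℓ i + 1 < d → ℓ (tEnd d ℓ i) = false := by
    intro n
    induction n with
    | zero =>
      intro i hn h
      rw [tEnd] at h ⊢; split at h <;> rename_i h3
      · omega
      · rw [dif_neg h3]
        rcases Bool.eq_false_or_eq_true (ℓ i) with ht | hf
        · exact absurd ⟨h, ht⟩ h3
        · exact hf
    | succ n ih =>
      intro i hn h
      rw [tEnd] at h ⊢; split at h <;> rename_i h3
      · rw [dif_pos h3]; exact ih (i+1) (by omega) h
      · rw [dif_neg h3]
        rcases Bool.eq_false_or_eq_true (ℓ i) with ht | hf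
        · exact absurd ⟨h, ht⟩ h3
        · exact hf
  exact H (d - i) i (le_refl _) h

lemma tEnd_le {i t : ℕ} (h1 : i ≤ t) (h2 : t < d) (h3 : t + 1 = d ∨ ℓ t = false) :
    tEnd d ℓ i ≤ t := by
  have H : ∀ n i, d - i ≤ n → i ≤ t → tEnd d ℓ i ≤ t := by
    intro n
    induction n with
    | zero => intro i hn hi; rw [tEnd]; split
              · rename_i h4; omega
              · exact hi
    | succ n ih =>
      intro i hn hi
      rw [tEnd]; split
      · rename_i h4
        have : i < t := by
          rcases eq_or_lt_of_le hi with rfl | h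
          · rcases h3 with h | h
            · omega
            · rw [h] at h4; exact absurd h4.2 (by simp)
          · exact h
        exact ih (i+1) (by omega) this
      · exact hi
  exact H (d - i) i (le_refl _) h1

lemma fEnd_ge (i : ℕ) : i ≤ fEnd d ℓ i := by
  have H : ∀ n i, d - i ≤ n → i ≤ fEnd d ℓ i := by
    intro n
    induction n with
    | zero =>
      intro i h; rw [fEnd]; split
      · rename_i h2; omega
      · exact le_refl i
    | succ n ih =>
      intro i h; rw [fEnd]; split
      · rename_i h2; exact le_trans (Nat.le_succ i) (ih (i+1) (by omega))
      · exact le_refl i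
  exact H (d - i) i (le_refl _)

lemma fEnd_lt {i : ℕ} (h : i < d) : fEnd d ℓ i < d := by
  have H : ∀ n i, d - i ≤ n → i < d → fEnd d ℓ i < d := by
    intro n
    induction n with
    | zero => intro i h1 h2; rw [fEnd]; split
              · rename_i h3; omega
              · exact h2
    | succ n ih => intro i h1 h2; rw [fEnd]; split
                   · rename_i h3; exact ih (i+1) (by omega) h3.1
                   · exact h2
  exact H (d - i) i (le_refl _) h

lemma fEnd_false {i : ℕ} : ∀ k, i ≤ k → k < fEnd d ℓ i → ℓ k = false := by
  have H : ∀ n i, d - i ≤ n → ∀ k, i ≤ k → k < fEnd d ℓ i → ℓ k = false := by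
    intro n
    induction n with
    | zero =>
      intro i h k hk1 hk2
      rw [fEnd] at hk2; split at hk2
      · rename_i h3; omega
      · omega
    | succ n ih =>
      intro i h k hk1 hk2
      rw [fEnd] at hk2; split at hk2
      · rename_i h3
        rcases eq_or_lt_of_le hk1 with rfl | hlt
        · exact h3.2
        · exact ih (i+1) (by omega) k hlt hk2
      · omega
  exact H (d - i) i (le_refl _)

lemma fEnd_stop {i : ℕ} (h : fEnd d ℓ i + 1 < d) : ℓ (fEnd d ℓ i) = true := by
  have H : ∀ n i, d - i ≤ n → fEnd d ℓ i + 1 < d → ℓ (fEnd d ℓ i) = true := by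
    intro n
    induction n with
    | zero =>
      intro i hn h
      rw [fEnd] at h ⊢; split at h <;> rename_i h3
      · omega
      · rw [dif_neg h3]
        rcases Bool.eq_false_or_eq_true (ℓ i) with ht | hf
        · exact ht
        · exact absurd ⟨h, hf⟩ h3
    | succ n ih =>
      intro i hn h
      rw [fEnd] at h ⊢; split at h <;> rename_i h3
      · rw [dif_pos h3]; exact ih (i+1) (by omega) h
      · rw [dif_neg h3]
        rcases Bool.eq_false_or_eq_true (ℓ i) with ht | hf
        · exact ht
        · exact absurd ⟨h, hf⟩ h3
  exact H (d - i) i (le_refl _) h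

lemma fEnd_le {i t : ℕ} (h1 : i ≤ t) (h2 : t < d) (h3 : t + 1 = d ∨ ℓ t = true) :
    fEnd d ℓ i ≤ t := by
  have H : ∀ n i, d - i ≤ n → i ≤ t → fEnd d ℓ i ≤ t := by
    intro n
    induction n with
    | zero => intro i hn hi; rw [fEnd]; split
              · rename_i h4; omega
              · exact hi
    | succ n ih =>
      intro i hn hi
      rw [fEnd]; split
      · rename_i h4
        have : i < t := by
          rcases eq_or_lt_of_le hi with rfl | h
          · rcases h3 with h | h
            · omega
            · rw [h] at h4; exact absurd h4.2 (by simp)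
          · exact h
        exact ih (i+1) (by omega) this
      · exact hi
  exact H (d - i) i (le_refl _) h1

lemma fStart_le (i : ℕ) : fStart ℓ i ≤ i := by
  induction i with
  | zero => exact le_refl 0
  | succ j ih =>
    rw [fStart]; split
    · exact le_trans ih (Nat.le_succ j)
    · exact le_refl _

lemma fStart_false {i : ℕ} : ∀ k, fStart ℓ i ≤ k → k < i → ℓ k = false := by
  induction i with
  | zero => intro k h1 h2; omega
  | succ j ih =>
    intro k h1 h2
    rw [fStart] at h1; split at h1 <;> rename_i h3
    · rcases lt_or_ge k j with h | h
      · exact ih k h1 h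
      · have : k = j := by omega
        rw [this]; exact h3
    · omega

lemma fStart_stop (i : ℕ) : fStart ℓ i = 0 ∨ ℓ (fStart ℓ i - 1) = true := by
  induction i with
  | zero => exact Or.inl rfl
  | succ j ih =>
    rw [fStart]; split <;> rename_i h3
    · exact ih
    · right
      simp only [Nat.add_sub_cancel]
      rcases Bool.eq_false_or_eq_true (ℓ j) with ht | hf
      · exact ht
      · exact absurd hf h3

lemma tStart_le (i : ℕ) : tStart ℓ i ≤ i := by
  induction i with
  | zero => exact le_refl 0
  | succ j ih =>
    rw [tStart]; split
    · exact le_trans ih (Nat.le_succ j)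
    · exact le_refl _

lemma tStart_true {i : ℕ} : ∀ k, tStart ℓ i ≤ k → k < i → ℓ k = true := by
  induction i with
  | zero => intro k h1 h2; omega
  | succ j ih =>
    intro k h1 h2
    rw [tStart] at h1; split at h1 <;> rename_i h3
    · rcases lt_or_ge k j with h | h
      · exact ih k h1 h
      · have : k = j := by omega
        rw [this]; exact h3
    · omega

lemma tStart_stop (i : ℕ) : tStart ℓ i = 0 ∨ ℓ (tStart ℓ i - 1) = false := by
  induction i with
  | zero => exact Or.inl rfl
  | succ j ih =>
    rw [tStart]; split <;> rename_i h3
    · exact ih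
    · right
      simp only [Nat.add_sub_cancel]
      rcases Bool.eq_false_or_eq_true (ℓ j) with ht | hf
      · exact absurd ht h3
      · exact hf

lemma dirf_succ_eq {k : ℕ} (h : flp ℓ k = false) : dirf ℓ (k+1) = dirf ℓ k := by
  rw [dirf]; simp [h]

lemma dirf_succ_ne {k : ℕ} (h : flp ℓ k = true) : dirf ℓ (k+1) = !(dirf ℓ k) := by
  rw [dirf]; simp [h]

lemma flp_false_of {k : ℕ} (h : ℓ k = false ∨ ℓ (k+1) = true) : flp ℓ k = false := by
  rcases h with h | h <;> simp [flp, h]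

lemma dirf_const {a b : ℕ} (hnf : ∀ k, a ≤ k → k + 1 < b → flp ℓ k = false) :
    ∀ k, a ≤ k → k < b → dirf ℓ k = dirf ℓ a := by
  intro k
  induction k using Nat.strong_induction_on with
  | _ k ih =>
    intro hk1 hk2
    rcases eq_or_lt_of_le hk1 with rfl | hlt
    · rfl
    · obtain ⟨j, rfl⟩ := Nat.exists_eq_succ_of_ne_zero (by omega : k ≠ 0)
      rw [dirf_succ_eq (hnf j (by omega) (by omega)), ih j (by omega) (by omega) (by omega)]

end Runs

section Pre

lemma cmpQ_of_const' {s t : ℕ} (hs : s < d) (ht : t < d) (hst : s ≤ t)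
    (h : ∀ k, s ≤ k → k < t → dirf ℓ k = dirf ℓ s) : cmp' d (Q d ℓ) ⟨s, hs⟩ ⟨t, ht⟩ :=
  cmpQ_of_const (Fin.mk_le_mk.mpr hst) (fun k hk1 hk2 => h k hk1 hk2)

lemma const_of_cmpQ' {s t : ℕ} (hs : s < d) (ht : t < d) (hst : s ≤ t)
    (h : cmp' d (Q d ℓ) ⟨s, hs⟩ ⟨t, ht⟩) : ∀ k, s ≤ k → k < t → dirf ℓ k = dirf ℓ s :=
  fun k hk1 hk2 => const_of_cmpQ (Fin.mk_le_mk.mpr hst) h k hk1 hk2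

lemma pre_noflp {s m t : ℕ} (h : pre d ℓ s m t) :
    ∀ k, s ≤ k → k + 1 < t → flp ℓ k = false := by
  obtain ⟨h1, h2, h3, hfalse, htrue, hs, ht, hmt⟩ := h
  intro k hk1 hk2
  rcases lt_or_ge k m with h | h
  · exact flp_false_of (Or.inl (hfalse k hk1 h))
  · exact flp_false_of (Or.inr (htrue (k+1) (by omega) (by omega)))

lemma pre_const {s m t : ℕ} (h : pre d ℓ s m t) :
    ∀ k, s ≤ k → k < t → dirf ℓ k = dirf ℓ s :=
  dirf_const (pre_noflp h)

lemma noflp_of_const {s t : ℕ} (h : ∀ k, s ≤ k → k < t → dirf ℓ k = dirf ℓ s) :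
    ∀ k, s ≤ k → k + 1 < t → flp ℓ k = false := by
  intro k hk1 hk2
  by_contra hf
  rw [Bool.not_eq_false] at hf
  have h1 := dirf_succ_ne (ℓ := ℓ) hf
  rw [h k hk1 (by omega), h (k+1) (by omega) hk2] at h1
  exact absurd h1 (by simp)

lemma qint_of_pre {s m t : ℕ} (h : pre d ℓ s m t) (hs : s < d) (ht : t < d) :
    mint d (Q d ℓ) ⟨s, hs⟩ ⟨t, ht⟩ := by
  obtain ⟨h1, h2, h3, hfalse, htrue, hscond, htcond, hmt⟩ := h
  have hconst := pre_const ⟨h1, h2, h3, hfalse, htrue, hscond, htcond, hmt⟩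
  refine ⟨Fin.mk_le_mk.mpr (by omega), cmpQ_of_const' hs ht (by omega) hconst, ?_, ?_⟩
  · intro u hu hcmp
    have hus : u.val < s := hu
    have hud := u.isLt
    rcases hscond with rfl | ⟨hsm, hs1⟩
    · omega
    obtain ⟨s', hseq⟩ := Nat.exists_eq_succ_of_ne_zero (by omega : s ≠ 0)
    have hs1' : ℓ s' = true := by rw [(by omega : s' = s - 1)]; exact hs1
    have hcon : ∀ k, u.val ≤ k → k < t → dirf ℓ k = dirf ℓ u.val :=
      const_of_cmpQ' u.isLt ht (by omega) hcmp
    have e1 : dirf ℓ s' = dirf ℓ u.val := hcon s' (by omega) (by omega)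
    have e2 : dirf ℓ (s'+1) = dirf ℓ u.val := hcon (s'+1) (by omega) (by omega)
    have hflp : flp ℓ s' = true := by
      have : ℓ (s'+1) = false := hfalse (s'+1) (by omega) (by omega)
      simp [flp, hs1', this]
    have := dirf_succ_ne (ℓ := ℓ) hflp
    rw [e1, e2] at this
    exact absurd this (by simp)
  · intro u hu hcmp
    have hut : t < u.val := hu
    have hud := u.isLt
    have htd : t + 1 < d := by omega
    have hℓt : ℓ t = false := by rcases htcond with h | h; omega; exact h
    have hmlt : m < t := by
      rcases eq_or_lt_of_le h2 with rfl | h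
      · omega
      · exact h
    obtain ⟨t', hteq⟩ := Nat.exists_eq_succ_of_ne_zero (by omega : t ≠ 0)
    have hℓt1 : ℓ t' = true := htrue t' (by omega) (by omega)
    have hcon : ∀ k, s ≤ k → k < u.val → dirf ℓ k = dirf ℓ s :=
      const_of_cmpQ' hs u.isLt (by omega) hcmp
    have e1 : dirf ℓ t' = dirf ℓ s := hcon t' (by omega) (by omega)
    have e2 : dirf ℓ (t'+1) = dirf ℓ s := hcon (t'+1) (by omega) (by omega)
    have hflp : flp ℓ t' = true := by
      have : ℓ (t'+1) = false := by rw [(by omega : t' + 1 = t)]; exact hℓt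
      simp [flp, hℓt1, this]
    have := dirf_succ_ne (ℓ := ℓ) hflp
    rw [e1, e2] at this
    exact absurd this (by simp)

lemma pre_of_qint {s t : ℕ} {hs : s < d} {ht : t < d}
    (h : mint d (Q d ℓ) ⟨s, hs⟩ ⟨t, ht⟩) : pre d ℓ s (fEnd d ℓ s) t := by
  obtain ⟨hle, hcmp, hbot, htop⟩ := h
  have hst : s ≤ t := hle
  have hconst : ∀ k, s ≤ k → k < t → dirf ℓ k = dirf ℓ s := const_of_cmpQ' hs ht hst hcmp
  have hnoflp : ∀ k, s ≤ k → k + 1 < t → flp ℓ k = false := noflp_of_const hconst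
  -- top condition
  have htcond : t + 1 = d ∨ (ℓ t = false ∧ s < t) := by
    by_cases htd : t + 1 = d
    · exact Or.inl htd
    right
    have htd' : t + 1 < d := by omega
    have hnc := htop ⟨t+1, htd'⟩ (Fin.mk_lt_mk.mpr (by omega))
    have hslt : s < t := by
      rcases eq_or_lt_of_le hst with heq | h
      · subst heq
        exact absurd (cmpQ_of_const' hs htd' (by omega) (fun k hk1 hk2 => by
          rw [(by omega : k = s)])) hnc
      · exact h
    refine ⟨?_, hslt⟩
    by_contra hℓt
    rw [Bool.not_eq_false] at hℓt
    obtain ⟨t', hteq⟩ := Nat.exists_eq_succ_of_ne_zero (by omega : t ≠ 0)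
    have hflp : flp ℓ t' = false := flp_false_of (Or.inr (by rw [(by omega : t' + 1 = t)]; exact hℓt))
    apply hnc
    apply cmpQ_of_const' hs htd' (by omega)
    intro k hk1 hk2
    rcases lt_or_ge k t with hk | hk
    · exact hconst k hk1 hk
    · rw [(by omega : k = t' + 1), dirf_succ_eq hflp]
      exact hconst t' (by omega) (by omega)
  -- bottom condition
  have hscond : s = 0 ∨ (ℓ (s-1) = true ∧ s < t ∧ 0 < s) := by
    by_cases hs0 : s = 0
    · exact Or.inl hs0
    right
    obtain ⟨s', hseq⟩ := Nat.exists_eq_succ_of_ne_zero hs0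
    have hs1 : s - 1 < d := by omega
    have hnc := hbot ⟨s-1, hs1⟩ (Fin.mk_lt_mk.mpr (by omega))
    have hslt : s < t := by
      rcases eq_or_lt_of_le hst with heq | h
      · subst heq
        exact absurd (cmpQ_of_const' hs1 hs (by omega) (fun k hk1 hk2 => by
          rw [(by omega : k = s - 1)])) hnc
      · exact h
    refine ⟨?_, hslt, by omega⟩
    by_contra hℓs
    rw [Bool.not_eq_true] at hℓs
    have hflp : flp ℓ (s-1) = false := flp_false_of (Or.inl hℓs)
    apply hnc
    apply cmpQ_of_const' hs1 ht (by omega)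
    intro k hk1 hk2
    rcases eq_or_lt_of_le hk1 with heq | hk
    · rw [← heq]
    · have hd1 := dirf_succ_eq (ℓ := ℓ) hflp
      rw [(by omega : s - 1 + 1 = s)] at hd1
      rw [hconst k (by omega) hk2, hd1]
  set m := fEnd d ℓ s with hm
  have hsm : s ≤ m := fEnd_ge s
  have hmd : m < d := fEnd_lt hs
  have hfalse : ∀ k, s ≤ k → k < m → ℓ k = false := fun k h1 h2 => fEnd_false k h1 h2
  -- m ≤ t
  have hmt' : m ≤ t := by
    by_contra hgt
    push_neg at hgt
    have htd' : t + 1 < d := by omega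
    have hℓ : ∀ k, s ≤ k → k ≤ t → ℓ k = false := fun k h1 h2 => hfalse k h1 (by omega)
    have hslt : s < t := by
      rcases htcond with h | h
      · omega
      · exact h.2
    obtain ⟨t', hteq⟩ := Nat.exists_eq_succ_of_ne_zero (by omega : t ≠ 0)
    have hnc := htop ⟨t+1, htd'⟩ (Fin.mk_lt_mk.mpr (by omega))
    apply hnc
    apply cmpQ_of_const' hs htd' (by omega)
    intro k hk1 hk2
    rcases lt_or_ge k t with hk | hk
    · exact hconst k hk1 hk
    · rw [(by omega : k = t' + 1), dirf_succ_eq (flp_false_of (Or.inl (hℓ t' (by omega) (by omega))))]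
      exact hconst t' (by omega) (by omega)
  -- trues on [m, t)
  have htrue : ∀ k, m ≤ k → k < t → ℓ k = true := by
    intro k
    induction k using Nat.strong_induction_on with
    | _ k ih =>
      intro hk1 hk2
      rcases eq_or_lt_of_le hk1 with heq | hlt
      · rw [← heq]; exact fEnd_stop (by omega)
      · obtain ⟨k', hkeq⟩ := Nat.exists_eq_succ_of_ne_zero (by omega : k ≠ 0)
        have hℓk' : ℓ k' = true := ih k' (by omega) (by omega) (by omega)
        have hflp := hnoflp k' (by omega) (by omega)
        rw [flp, hℓk'] at hflp
        simp at hflp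
        rw [(by omega : k = k' + 1)]
        exact hflp
  refine ⟨hsm, hmt', ht, hfalse, htrue, ?_, ?_, ?_⟩
  · rcases hscond with h | ⟨h1, h2, h3⟩
    · exact Or.inl h
    right
    refine ⟨?_, h1⟩
    rcases eq_or_lt_of_le hsm with heq | h
    · exfalso
      have hℓs : ℓ s = true := by rw [heq]; exact fEnd_stop (by omega)
      have hflp : flp ℓ (s-1) = false := flp_false_of (Or.inr (by
        rw [(by omega : s - 1 + 1 = s)]; exact hℓs))
      have hnc := hbot ⟨s-1, by omega⟩ (Fin.mk_lt_mk.mpr (by omega))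
      apply hnc
      apply cmpQ_of_const' (by omega) ht (by omega)
      intro k hk1 hk2
      rcases eq_or_lt_of_le hk1 with heq2 | hk
      · rw [← heq2]
      · have hd1 := dirf_succ_eq (ℓ := ℓ) hflp
        rw [(by omega : s - 1 + 1 = s)] at hd1
        rw [hconst k (by omega) hk2, hd1]
    · exact h
  · rcases htcond with h | h
    · exact Or.inl h
    · exact Or.inr h.1
  · intro heq
    by_contra htd
    have htd' : t + 1 < d := by omega
    have hℓt : ℓ t = false := by
      rcases htcond with h | h
      · omega
      · exact h.1
    have : ℓ t = true := by rw [← heq]; exact fEnd_stop (by omega)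
    rw [this] at hℓt
    exact absurd hℓt (by simp)

end Pre

section Sums

lemma nsum_fin (y : Fin d → ℝ) (s t : Fin d) :
    ∑ i ∈ Finset.Icc s t, y i = nsum d y s.val (t.val + 1) := by
  rw [nsum, Finset.Ico_add_one_right_eq_Icc, ← Fin.map_valEmbedding_Icc, Finset.sum_map]
  apply Finset.sum_congr rfl
  intro i _
  simp [Fin.valEmbedding, i.isLt]

lemma nsum_concat {a b c : ℕ} (y : Fin d → ℝ) (h1 : a ≤ b) (h2 : b ≤ c) :
    nsum d y a b + nsum d y b c = nsum d y a c := by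
  rw [nsum, nsum, nsum]
  exact Finset.sum_Ico_consecutive _ h1 h2

lemma nsum_mono {a b a' b' : ℕ} (y : Fin d → ℝ) (hy : ∀ i, 0 ≤ y i) (h1 : a' ≤ a)
    (h2 : b ≤ b') : nsum d y a b ≤ nsum d y a' b' := by
  apply Finset.sum_le_sum_of_subset_of_nonneg (Finset.Ico_subset_Ico h1 h2)
  intro k _ _
  split
  · exact hy _
  · exact le_refl 0

lemma nsum_single {i : ℕ} (y : Fin d → ℝ) (h : i < d) : nsum d y i (i+1) = y ⟨i, h⟩ := by
  rw [nsum, Nat.Ico_succ_singleton, Finset.sum_singleton, dif_pos h]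

lemma nsum_nonneg {a b : ℕ} (y : Fin d → ℝ) (hy : ∀ i, 0 ≤ y i) : 0 ≤ nsum d y a b := by
  apply Finset.sum_nonneg
  intro k _
  split
  · exact hy _
  · exact le_refl 0

lemma Tm_pos {x : Fin d → ℝ} {i : Fin d} (h1 : i.val + 1 < d) (h2 : ℓ i.val = true) :
    Tm d ℓ x i = x i - x ⟨i.val + 1, h1⟩ := dif_pos ⟨h1, h2⟩

lemma Tm_neg {x : Fin d → ℝ} {i : Fin d} (h : ¬(i.val + 1 < d ∧ ℓ i.val = true)) :
    Tm d ℓ x i = x i := dif_neg h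

lemma nsum_tele {m t : ℕ} (x : Fin d → ℝ) (hmd : m < d) (hmt : m ≤ t) (htd : t < d)
    (htrue : ∀ k, m ≤ k → k < t → ℓ k = true)
    (hstop : ¬(t + 1 < d ∧ ℓ t = true)) :
    nsum d (Tm d ℓ x) m (t+1) = x ⟨m, hmd⟩ := by
  have H : ∀ n m, (hmd : m < d) → m ≤ t → t - m ≤ n →
      (∀ k, m ≤ k → k < t → ℓ k = true) → nsum d (Tm d ℓ x) m (t+1) = x ⟨m, hmd⟩ := by
    intro n
    induction n with
    | zero =>
      intro m hmd hmt hn htrue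
      have hmt' : m = t := by omega
      subst hmt'
      rw [nsum_single _ hmd, Tm_neg hstop]
    | succ n ih =>
      intro m hmd hmt hn htrue
      rcases eq_or_lt_of_le hmt with heq | hlt
      · subst heq
        rw [nsum_single _ hmd, Tm_neg hstop]
      · have hm1 : m + 1 < d := by omega
        have step : nsum d (Tm d ℓ x) m (t+1) =
            (if h : m < d then Tm d ℓ x ⟨m, h⟩ else 0) + nsum d (Tm d ℓ x) (m+1) (t+1) := by
          rw [nsum, nsum, Finset.sum_eq_sum_Ico_succ_bot (by omega : m < t + 1)]
        rw [step, dif_pos hmd, ih (m+1) hm1 (by omega) (by omega)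
          (fun k h1 h2 => htrue k (by omega) h2),
          Tm_pos hm1 (htrue m (le_refl _) hlt)]
        ring
  exact H (t - m) m hmd hmt (le_refl _) htrue

lemma Tm_invTm (y : Fin d → ℝ) (i : Fin d) :
    Tm d ℓ (fun j => invTm d ℓ y j.val) i = y i := by
  by_cases h : i.val + 1 < d ∧ ℓ i.val = true
  · rw [Tm_pos h.1 h.2]
    show invTm d ℓ y i.val - invTm d ℓ y (i.val + 1) = y i
    rw [invTm, dif_pos i.isLt, dif_pos h]
    ring
  · rw [Tm_neg h]
    show invTm d ℓ y i.val = y i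
    rw [invTm, dif_pos i.isLt, dif_neg h]
    ring

end Sums

section MatrixLemmas

lemma Amat_det : IsUnit (Amat d ℓ).det := by
  have htri : (Amat d ℓ).BlockTriangular id := by
    intro i j hij
    have hij' : j.val < i.val := hij
    simp only [Amat, Matrix.of_apply]
    rw [if_neg (by intro h; rw [h] at hij'; omega), if_neg (by intro h; omega)]
  rw [Matrix.det_of_upperTriangular htri]
  simp [Amat]

lemma mulVec_eq (x : Fin d → ℝ) :
    ((Amat d ℓ).map (Int.cast : ℤ → ℝ)).mulVec x = Tm d ℓ x := by
  funext i
  have hsplit : ∀ j : Fin d, ((Amat d ℓ).map (Int.cast : ℤ → ℝ)) i j * x j =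
      (if j = i then x j else 0) + (if j.val = i.val + 1 ∧ ℓ i.val = true then -x j else 0) := by
    intro j
    simp only [Amat, Matrix.map_apply, Matrix.of_apply]
    by_cases h1 : j = i
    · subst h1
      rw [if_pos rfl, if_pos rfl, if_neg (by intro h; omega)]
      push_cast; ring
    · by_cases h2 : j.val = i.val + 1 ∧ ℓ i.val = true
      · rw [if_neg h1, if_pos h2, if_neg h1, if_pos h2]; push_cast; ring
      · rw [if_neg h1, if_neg h2, if_neg h1, if_neg h2]; push_cast; ring
  have : ((Amat d ℓ).map (Int.cast : ℤ → ℝ)).mulVec x i =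
      ∑ j : Fin d, ((Amat d ℓ).map (Int.cast : ℤ → ℝ)) i j * x j := by
    rw [Matrix.mulVec, dotProduct]
  rw [this, Finset.sum_congr rfl (fun j _ => hsplit j), Finset.sum_add_distrib]
  have e1 : ∑ j : Fin d, (if j = i then x j else 0) = x i := Finset.sum_ite_eq' _ i _ |>.trans (by simp)
  by_cases h : i.val + 1 < d ∧ ℓ i.val = true
  · have e2 : ∑ j : Fin d, (if j.val = i.val + 1 ∧ ℓ i.val = true then -x j else 0)
        = -x ⟨i.val + 1, h.1⟩ := by
      rw [Finset.sum_congr rfl (g := fun j => if j = (⟨i.val + 1, h.1⟩ : Fin d) then -x j else 0)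
        (fun j _ => by
          congr 1
          simp only [eq_iff_iff]
          constructor
          · intro hj; exact Fin.ext hj.1
          · intro hj; rw [hj]; exact ⟨rfl, h.2⟩)]
      exact Finset.sum_ite_eq' _ _ _ |>.trans (by simp)
    rw [e1, e2, Tm_pos h.1 h.2]
    ring
  · have e2 : ∑ j : Fin d, (if j.val = i.val + 1 ∧ ℓ i.val = true then -x j else 0) = 0 := by
      apply Finset.sum_eq_zero
      intro j _
      rw [if_neg]
      intro hj
      exact h ⟨by rw [← hj.1]; exact j.isLt, hj.2⟩
    rw [e1, e2, Tm_neg h]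
    ring
  
end MatrixLemmas

section Covering

lemma tEnd_reach {a b : ℕ} (hab : a ≤ b) (hb : b < d)
    (h : ∀ k, a ≤ k → k < b → ℓ k = true) : b ≤ tEnd d ℓ a := by
  have H : ∀ n a, d - a ≤ n → a ≤ b → (∀ k, a ≤ k → k < b → ℓ k = true) → b ≤ tEnd d ℓ a := by
    intro n
    induction n with
    | zero => intro a hn hab h; omega
    | succ n ih =>
      intro a hn hab h
      rcases eq_or_lt_of_le hab with heq | hlt
      · subst heq; exact tEnd_ge a
      · have h1 : a + 1 < d := by omega
        have h2 : ℓ a = true := h a (le_refl _) hlt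
        rw [tEnd, dif_pos ⟨h1, h2⟩]
        exact ih (a+1) (by omega) (by omega) (fun k hk1 hk2 => h k (by omega) hk2)
  exact H (d - a) a (le_refl _) hab h

lemma tEnd_gt {a : ℕ} (h1 : a + 1 < d) (h2 : ℓ a = true) : a + 1 ≤ tEnd d ℓ a := by
  rw [tEnd, dif_pos ⟨h1, h2⟩]; exact tEnd_ge (a+1)

lemma fStart_step {j : ℕ} (h : ℓ j = false) : fStart ℓ (j+1) ≤ j := by
  rw [fStart, if_pos h]; exact fStart_le j

/-- every point of `[0,d)` lies in a maximal zigzag interval. -/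
lemma covering {i : ℕ} (hi : i < d) : ∃ s m t, pre d ℓ s m t ∧ s ≤ i ∧ i ≤ t := by
  by_cases hA : (0 < i ∧ ℓ (i-1) = true) ∨ (i + 1 < d ∧ ℓ i = true)
  · -- i is incident to a true edge
    set a := tStart ℓ i with ha
    have haux : a ≤ i := tStart_le i
    have htr : ∀ k, a ≤ k → k < i → ℓ k = true := fun k h1 h2 => tStart_true k h1 h2
    set t := tEnd d ℓ a with htdef
    have hat : a ≤ t := tEnd_ge a
    have htd : t < d := tEnd_lt (by omega)
    have hit : i ≤ t := tEnd_reach haux hi htr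
    have hlt : a < t := by
      rcases hA with ⟨h1, h2⟩ | ⟨h1, h2⟩
      · have hai : a < i := by
          have := tStart_stop (ℓ := ℓ) i
          rcases this with h0 | h0
          · omega
          · -- a > 0 would give ℓ (a-1) = false; but also if a = i then ℓ (i-1) = false
            by_contra hcon
            push_neg at hcon
            have heq : a = i := by omega
            rw [← ha, heq] at h0
            rw [h0] at h2
            exact absurd h2 (by simp)
        omega
      · have hℓa : ℓ a = true := by
          rcases eq_or_lt_of_le haux with heq | hlt2
          · rw [heq]; exact h2
          · exact htr a (le_refl _) hlt2
        have h3 := tEnd_gt (by omega : a + 1 < d) hℓa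
        rw [← htdef] at h3
        omega
    set s := fStart ℓ a with hsdef
    have hsa : s ≤ a := fStart_le a
    refine ⟨s, a, t, ⟨hsa, hat, htd, fun k h1 h2 => fStart_false k h1 h2,
      fun k h1 h2 => tEnd_true k h1 h2, ?_, Or.symm (Or.symm ?_), by omega⟩, by omega, hit⟩
    · by_cases hs0 : s = 0
      · exact Or.inl hs0
      right
      have h0 : ℓ (s - 1) = true := by
        rcases fStart_stop (ℓ := ℓ) a with h0 | h0 <;> rw [← hsdef] at h0
        · omega
        · exact h0
      refine ⟨?_, h0⟩
      have ha0 : a ≠ 0 := by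
        intro h1
        apply hs0
        rw [hsdef, h1]
        rfl
      have h1 : ℓ (a - 1) = false := by
        rcases tStart_stop (ℓ := ℓ) i with h1 | h1 <;> rw [← ha] at h1
        · omega
        · exact h1
      obtain ⟨a', haeq⟩ := Nat.exists_eq_succ_of_ne_zero ha0
      have h2 : s ≤ a' := by
        rw [hsdef, haeq]
        exact fStart_step (by rw [(by omega : a' = a - 1)]; exact h1)
      omega
    · rcases Nat.lt_or_ge (t+1) d with h | h
      · exact Or.inr (tEnd_stop h)
      · left; omega
  · -- i is inside a false run
    push_neg at hA
    set m := fEnd d ℓ i with hmdef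
    have him : i ≤ m := fEnd_ge i
    have hmd : m < d := fEnd_lt hi
    set t := tEnd d ℓ m with htdef
    have hmt : m ≤ t := tEnd_ge m
    have htd : t < d := tEnd_lt hmd
    set s := fStart ℓ i with hsdef
    have hsi : s ≤ i := fStart_le i
    have hfalse : ∀ k, s ≤ k → k < m → ℓ k = false := by
      intro k h1 h2
      rcases lt_or_ge k i with h | h
      · exact fStart_false k h1 h
      · exact fEnd_false k h h2
    refine ⟨s, m, t, ⟨by omega, hmt, htd, hfalse, fun k h1 h2 => tEnd_true k h1 h2,
      ?_, ?_, ?_⟩, hsi, by omega⟩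
    · by_cases hs0 : s = 0
      · exact Or.inl hs0
      right
      have h0 : ℓ (s - 1) = true := by
        rcases fStart_stop (ℓ := ℓ) i with h0 | h0 <;> rw [← hsdef] at h0
        · omega
        · exact h0
      refine ⟨?_, h0⟩
      have hi0 : i ≠ 0 := by
        intro h1
        apply hs0
        rw [hsdef, h1]
        rfl
      have h1 : ℓ (i - 1) = false := by
        have h1 := hA.1 (by omega)
        simpa using h1
      obtain ⟨i', hieq⟩ := Nat.exists_eq_succ_of_ne_zero hi0
      have h2 : s ≤ i' := by
        rw [hsdef, hieq]
        exact fStart_step (by rw [(by omega : i' = i - 1)]; exact h1)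
      omega
    · rcases Nat.lt_or_ge (t+1) d with h | h
      · exact Or.inr (tEnd_stop h)
      · left; omega
    · intro heq
      by_contra htd1
      have htd1' : t + 1 < d := by omega
      have hℓm : ℓ m = true := fEnd_stop (by omega)
      have := tEnd_gt (by omega : m + 1 < d) hℓm
      rw [← htdef] at this
      omega

end Covering

section Main

lemma Q_up' {a b : ℕ} (ha : a < d) (hb : b < d) (hab : a < b)
    (h : ∀ k, a ≤ k → k < b → dirf ℓ k = true) : Q d ℓ ⟨a, ha⟩ ⟨b, hb⟩ :=
  Or.inr (Or.inl ⟨hab, h⟩)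

lemma Q_dn' {a b : ℕ} (ha : a < d) (hb : b < d) (hba : b < a)
    (h : ∀ k, b ≤ k → k < a → dirf ℓ k = false) : Q d ℓ ⟨a, ha⟩ ⟨b, hb⟩ :=
  Or.inr (Or.inr ⟨hba, h⟩)


lemma Q_maxChain_iff (hd : 0 < d) (C : Set (Fin d)) :
    IsMaxChain (Q d ℓ) C ↔ ∃ s t : Fin d, mint d (Q d ℓ) s t ∧ C = Set.Icc s t :=
  maxChain_iff Q_refl (fun _ _ _ h1 h2 h3 => cmpQ_convex h1 h2 h3) hd C

lemma RF_maxChain_iff (hd : 0 < d) (C : Set (Fin d)) :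
    IsMaxChain (genOrd fun a b : Fin d => a.val + 1 = b.val ∧ ℓ a.val = false) C ↔
      ∃ s t : Fin d, mint d (genOrd fun a b : Fin d => a.val + 1 = b.val ∧ ℓ a.val = false) s t ∧
        C = Set.Icc s t :=
  maxChain_iff (fun _ => Relation.ReflTransGen.refl)
    (fun _ _ _ h1 h2 h3 => cmpC_convex h1 h2 h3) hd C

lemma qsum_le (hd : 0 < d) {y : Fin d → ℝ} (hy : y ∈ chainPolytope (Q d ℓ))
    {s t : ℕ} (hs : s < d) (ht : t < d) (h : mint d (Q d ℓ) ⟨s, hs⟩ ⟨t, ht⟩) :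
    nsum d y s (t+1) ≤ 1 := by
  have h2 := hy.2 (Finset.Icc ⟨s, hs⟩ ⟨t, ht⟩) (by
    rw [Finset.coe_Icc, Q_maxChain_iff hd]
    exact ⟨_, _, h, rfl⟩)
  rw [nsum_fin] at h2
  exact h2

lemma forward (hd : 0 < d) (x : Fin d → ℝ)
    (hO : x ∈ orderPolytope (genOrd fun a b : Fin d => a.val + 1 = b.val ∧ ℓ a.val = true))
    (hC : x ∈ chainPolytope (genOrd fun a b : Fin d => a.val + 1 = b.val ∧ ℓ a.val = false)) :
    Tm d ℓ x ∈ chainPolytope (Q d ℓ) := by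
  rw [mem_orderPolytope_iff] at hO
  obtain ⟨hb, hmono⟩ := hO
  constructor
  · intro i
    by_cases h : i.val + 1 < d ∧ ℓ i.val = true
    · rw [Tm_pos h.1 h.2]
      have h2 : x ⟨i.val + 1, h.1⟩ ≤ x i := hmono i.val h.1 h.2
      linarith
    · rw [Tm_neg h]; exact (hb i).1
  · intro C hmc
    rw [Q_maxChain_iff hd] at hmc
    obtain ⟨sf, tf, hmint, hCeq⟩ := hmc
    have hCfin : C = Finset.Icc sf tf := Finset.coe_injective (by rw [Finset.coe_Icc]; exact hCeq)
    subst hCfin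
    rw [nsum_fin]
    have hmint' : mint d (Q d ℓ) ⟨sf.val, sf.isLt⟩ ⟨tf.val, tf.isLt⟩ := hmint
    obtain ⟨h1, h2, h3, hfalse, htrue, hscond, htcond, hmt⟩ := pre_of_qint hmint'
    have hmd : fEnd d ℓ sf.val < d := by omega
    have hstop : ¬(tf.val + 1 < d ∧ ℓ tf.val = true) := by
      rintro ⟨hcon1, hcon2⟩
      rcases htcond with hh | hh
      · omega
      · rw [hcon2] at hh; exact absurd hh (by simp)
    have htele : nsum d (Tm d ℓ x) (fEnd d ℓ sf.val) (tf.val + 1) = x ⟨fEnd d ℓ sf.val, hmd⟩ :=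
      nsum_tele x hmd h2 tf.isLt htrue hstop
    have hcongr : nsum d (Tm d ℓ x) sf.val (fEnd d ℓ sf.val) = nsum d x sf.val (fEnd d ℓ sf.val) := by
      simp only [nsum]
      apply Finset.sum_congr rfl
      intro k hk
      rw [Finset.mem_Ico] at hk
      by_cases hkd : k < d
      · rw [dif_pos hkd, dif_pos hkd, Tm_neg (by
          rintro ⟨hcon1, hcon2⟩
          rw [hfalse k hk.1 hk.2] at hcon2
          exact absurd hcon2 (by simp))]
      · rw [dif_neg hkd, dif_neg hkd]
    have hmc' : IsMaxChain (genOrd fun a b : Fin d => a.val + 1 = b.val ∧ ℓ a.val = false)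
        ((Finset.Icc (⟨sf.val, sf.isLt⟩ : Fin d) ⟨fEnd d ℓ sf.val, hmd⟩ :
          Finset (Fin d)) : Set (Fin d)) := by
      rw [Finset.coe_Icc, RF_maxChain_iff hd]
      refine ⟨_, _, ⟨Fin.mk_le_mk.mpr h1, ?_, ?_, ?_⟩, rfl⟩
      · exact (cmpC_iff (Fin.mk_le_mk.mpr h1)).mpr (fun k hk1 hk2 => hfalse k hk1 hk2)
      · intro u hu hcmp
        have hus : u.val < sf.val := hu
        have hule : u ≤ (⟨fEnd d ℓ sf.val, hmd⟩ : Fin d) :=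
          Fin.le_def.mpr (show u.val ≤ fEnd d ℓ sf.val by omega)
        have hall : ∀ k, u.val ≤ k → k < fEnd d ℓ sf.val → ℓ k = false :=
          (cmpC_iff hule).mp hcmp
        rcases hscond with h | ⟨hsm, hs1⟩
        · omega
        · have hthis := hall (sf.val - 1) (by omega) (by omega)
          rw [hthis] at hs1
          exact absurd hs1 (by simp)
      · intro u hu hcmp
        have hum : fEnd d ℓ sf.val < u.val := hu
        have hud := u.isLt
        have hsle : (⟨sf.val, sf.isLt⟩ : Fin d) ≤ u :=
          Fin.le_def.mpr (show sf.val ≤ u.val by omega)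
        have hall : ∀ k, sf.val ≤ k → k < u.val → ℓ k = false := (cmpC_iff hsle).mp hcmp
        have hℓm : ℓ (fEnd d ℓ sf.val) = true := fEnd_stop (by omega)
        have hthis := hall (fEnd d ℓ sf.val) (by omega) (by omega)
        rw [hthis] at hℓm
        exact absurd hℓm (by simp)
    calc nsum d (Tm d ℓ x) sf.val (tf.val + 1)
        = nsum d (Tm d ℓ x) sf.val (fEnd d ℓ sf.val) +
            nsum d (Tm d ℓ x) (fEnd d ℓ sf.val) (tf.val + 1) :=
          (nsum_concat _ h1 (by omega)).symm
      _ = nsum d x sf.val (fEnd d ℓ sf.val) + x ⟨fEnd d ℓ sf.val, hmd⟩ := by rw [htele, hcongr]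
      _ = nsum d x sf.val (fEnd d ℓ sf.val) + nsum d x (fEnd d ℓ sf.val) (fEnd d ℓ sf.val + 1) := by
          rw [nsum_single x hmd]
      _ = nsum d x sf.val (fEnd d ℓ sf.val + 1) := nsum_concat _ h1 (by omega)
      _ = ∑ i ∈ Finset.Icc (⟨sf.val, sf.isLt⟩ : Fin d) ⟨fEnd d ℓ sf.val, hmd⟩, x i :=
          (nsum_fin x ⟨sf.val, sf.isLt⟩ ⟨fEnd d ℓ sf.val, hmd⟩).symm
      _ ≤ 1 := hC.2 _ hmc'

lemma backward (hd : 0 < d) (y : Fin d → ℝ) (hQ : y ∈ chainPolytope (Q d ℓ)) :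
    (fun j : Fin d => invTm d ℓ y j.val) ∈
      (orderPolytope (genOrd fun a b : Fin d => a.val + 1 = b.val ∧ ℓ a.val = true) ∩
       chainPolytope (genOrd fun a b : Fin d => a.val + 1 = b.val ∧ ℓ a.val = false)) := by
  set x : Fin d → ℝ := fun j => invTm d ℓ y j.val with hx
  have hy0 : ∀ i, 0 ≤ y i := hQ.1
  have hTx : Tm d ℓ x = y := funext (Tm_invTm y)
  have hxeq : ∀ (i : ℕ) (hi : i < d), x ⟨i, hi⟩ = nsum d y i (tEnd d ℓ i + 1) := by
    intro i hi
    have hstop : ¬(tEnd d ℓ i + 1 < d ∧ ℓ (tEnd d ℓ i) = true) := by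
      rintro ⟨hcon1, hcon2⟩
      have := tEnd_stop (ℓ := ℓ) hcon1
      rw [this] at hcon2
      exact absurd hcon2 (by simp)
    have h1 := nsum_tele (ℓ := ℓ) x hi (tEnd_ge i) (tEnd_lt hi)
      (fun k hk1 hk2 => tEnd_true k hk1 hk2) hstop
    rw [hTx] at h1
    exact h1.symm
  have hx0 : ∀ i : Fin d, 0 ≤ x i := by
    intro i
    have e : x i = nsum d y i.val (tEnd d ℓ i.val + 1) := hxeq i.val i.isLt
    rw [e]
    exact nsum_nonneg y hy0
  have hx1 : ∀ i : Fin d, x i ≤ 1 := by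
    intro i
    obtain ⟨s, m, t, hpre, hsi, hit⟩ := covering (ℓ := ℓ) i.isLt
    obtain ⟨h1, h2, h3, hfalse, htrue, hscond, htcond, hmt⟩ := hpre
    have hs : s < d := by omega
    have hqint := qint_of_pre ⟨h1, h2, h3, hfalse, htrue, hscond, htcond, hmt⟩ hs h3
    have hle := qsum_le hd hQ hs h3 hqint
    have e : x i = nsum d y i.val (tEnd d ℓ i.val + 1) := hxeq i.val i.isLt
    rw [e]
    refine le_trans (nsum_mono y hy0 hsi ?_) hle
    have : tEnd d ℓ i.val ≤ t := tEnd_le hit h3 htcond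
    omega
  refine ⟨?_, ?_⟩
  · rw [mem_orderPolytope_iff]
    refine ⟨fun i => ⟨hx0 i, hx1 i⟩, ?_⟩
    intro j hj hℓj
    have e : x ⟨j, Nat.lt_of_succ_lt hj⟩ = y ⟨j, Nat.lt_of_succ_lt hj⟩ + x ⟨j+1, hj⟩ := by
      show invTm d ℓ y j = _
      rw [invTm, dif_pos (Nat.lt_of_succ_lt hj), dif_pos ⟨hj, hℓj⟩]
    rw [e]
    have := hy0 ⟨j, Nat.lt_of_succ_lt hj⟩
    linarith
  · refine ⟨hx0, ?_⟩
    intro C hmc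
    rw [RF_maxChain_iff hd] at hmc
    obtain ⟨sf, tf, ⟨hstle, hcmp, hbot, htop⟩, hCeq⟩ := hmc
    have hCfin : C = Finset.Icc sf tf := Finset.coe_injective (by rw [Finset.coe_Icc]; exact hCeq)
    subst hCfin
    rw [nsum_fin]
    have hstle' : sf.val ≤ tf.val := hstle
    have hfalse : ∀ k, sf.val ≤ k → k < tf.val → ℓ k = false := (cmpC_iff hstle).mp hcmp
    have htqd : tEnd d ℓ tf.val < d := tEnd_lt tf.isLt
    have htqge : tf.val ≤ tEnd d ℓ tf.val := tEnd_ge tf.val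
    have hsum : nsum d x sf.val (tf.val + 1) = nsum d y sf.val (tEnd d ℓ tf.val + 1) := by
      have hxy : nsum d x sf.val tf.val = nsum d y sf.val tf.val := by
        simp only [nsum]
        apply Finset.sum_congr rfl
        intro k hk
        rw [Finset.mem_Ico] at hk
        by_cases hkd : k < d
        · rw [dif_pos hkd, dif_pos hkd]
          have e2 : Tm d ℓ x ⟨k, hkd⟩ = x ⟨k, hkd⟩ := Tm_neg (by
            rintro ⟨hcon1, hcon2⟩
            rw [hfalse k hk.1 hk.2] at hcon2
            exact absurd hcon2 (by simp))
          rw [← e2, hTx]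
        · rw [dif_neg hkd, dif_neg hkd]
      have hxt : nsum d x tf.val (tf.val + 1) = nsum d y tf.val (tEnd d ℓ tf.val + 1) := by
        rw [nsum_single x tf.isLt]
        exact hxeq tf.val tf.isLt
      rw [← nsum_concat x hstle' (by omega), hxy, hxt, nsum_concat y hstle' (by omega)]
    rw [hsum]
    rcases eq_or_lt_of_le hstle' with heq | hlt
    · rw [heq, ← hxeq tf.val tf.isLt]
      exact hx1 tf
    · have hbot' : sf.val = 0 ∨ ℓ (sf.val - 1) = true := by
        by_cases h0 : sf.val = 0
        · exact Or.inl h0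
        right
        by_contra hc
        rw [Bool.not_eq_true] at hc
        apply hbot ⟨sf.val - 1, by omega⟩ (Fin.lt_def.mpr (show sf.val - 1 < sf.val by omega))
        have hall : ∀ k, sf.val - 1 ≤ k → k < tf.val → ℓ k = false := by
          intro k hk1 hk2
          rcases eq_or_lt_of_le hk1 with heq2 | hk
          · rw [← heq2]; exact hc
          · exact hfalse k (by omega) hk2
        exact (cmpC_iff (Fin.le_def.mpr (show sf.val - 1 ≤ tf.val by omega))).mpr hall
      have htop' : tf.val + 1 = d ∨ ℓ tf.val = true := by
        by_cases h0 : tf.val + 1 = d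
        · exact Or.inl h0
        right
        by_contra hc
        rw [Bool.not_eq_true] at hc
        have htd' : tf.val + 1 < d := by have := tf.isLt; omega
        apply htop ⟨tf.val + 1, htd'⟩ (Fin.lt_def.mpr (show tf.val < tf.val + 1 by omega))
        have hall : ∀ k, sf.val ≤ k → k < tf.val + 1 → ℓ k = false := by
          intro k hk1 hk2
          rcases lt_or_ge k tf.val with hk | hk
          · exact hfalse k hk1 hk
          · rw [(by omega : k = tf.val)]; exact hc
        exact (cmpC_iff (Fin.le_def.mpr (show sf.val ≤ tf.val + 1 by omega))).mpr hall
      have hpre : pre d ℓ sf.val tf.val (tEnd d ℓ tf.val) := by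
        refine ⟨hstle', htqge, htqd, hfalse, fun k hk1 hk2 => tEnd_true k hk1 hk2, ?_, ?_, ?_⟩
        · rcases hbot' with h | h
          · exact Or.inl h
          · exact Or.inr ⟨hlt, h⟩
        · rcases Nat.lt_or_ge (tEnd d ℓ tf.val + 1) d with h | h
          · exact Or.inr (tEnd_stop h)
          · exact Or.inl (by omega)
        · intro heq2
          by_contra hc
          have hℓt : ℓ tf.val = true := by
            rcases htop' with h | h
            · omega
            · exact h
          have := tEnd_gt (by omega : tf.val + 1 < d) hℓt
          omega
      exact qsum_le hd hQ (by omega) htqd (qint_of_pre hpre (by omega) htqd)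

end Main
end Stmt13

/-- for the chain `0 ≺ 1 ≺ ⋯ ≺ d−1` and any edge partition `ℓ`
(edge `{i,i+1}` goes to the order side iff `ℓ i = true`), the order-chain polytope
`O(P'_ℓ) ∩ C(P''_ℓ)` is unimodularly equivalent to the chain polytope of a zigzag
poset `q` on `[d]`. -/
theorem stmt_13 (d : ℕ) (hd : 1 ≤ d) (ℓ : ℕ → Bool) :
    ∃ (q : Fin d → Fin d → Prop) (A : Matrix (Fin d) (Fin d) ℤ) (v : Fin d → ℤ),
      IsPartialOrder (Fin d) q ∧
      (∀ a b : Fin d, covRel q a b → a.val + 1 = b.val ∨ b.val + 1 = a.val) ∧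
      (∀ j : ℕ, (h : j + 1 < d) →
        q ⟨j, Nat.lt_of_succ_lt h⟩ ⟨j + 1, h⟩ ∨ q ⟨j + 1, h⟩ ⟨j, Nat.lt_of_succ_lt h⟩) ∧
      IsUnit A.det ∧
      (fun x : Fin d → ℝ =>
          (A.map (Int.cast : ℤ → ℝ)).mulVec x + fun i => (v i : ℝ)) ''
        (orderPolytope (genOrd fun a b : Fin d => a.val + 1 = b.val ∧ ℓ a.val = true) ∩
         chainPolytope (genOrd fun a b : Fin d => a.val + 1 = b.val ∧ ℓ a.val = false))
        = chainPolytope q := by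
  have hd0 : 0 < d := hd
  refine ⟨Stmt13.Q d ℓ, Stmt13.Amat d ℓ, 0, ?_, ?_, ?_, Stmt13.Amat_det, ?_⟩
  · exact { refl := Stmt13.Q_refl,
            trans := fun a b c h1 h2 => Stmt13.Q_trans h1 h2,
            antisymm := fun a b h1 h2 => Stmt13.Q_antisymm h1 h2 }
  · intro a b hcov
    obtain ⟨hab, hne, hmin⟩ := hcov
    rcases hab with heq | h
    · exact absurd heq hne
    rcases h with ⟨hlt, hup⟩ | ⟨hlt, hdn⟩
    · left
      by_contra hc
      have h1 : a.val + 1 < b.val := by omega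
      have hcd : a.val + 1 < d := by have := b.isLt; omega
      have hQ1 : Stmt13.Q d ℓ a ⟨a.val + 1, hcd⟩ :=
        Stmt13.Q_up' a.isLt hcd (by omega) (fun k hk1 hk2 => hup k hk1 (by omega))
      have hQ2 : Stmt13.Q d ℓ ⟨a.val + 1, hcd⟩ b :=
        Stmt13.Q_up' hcd b.isLt (by omega) (fun k hk1 hk2 => hup k (by omega) hk2)
      rcases hmin _ hQ1 hQ2 with h | h
      · have hv : a.val + 1 = a.val := congrArg Fin.val h
        omega
      · have hv : a.val + 1 = b.val := congrArg Fin.val h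
        omega
    · right
      by_contra hc
      have h1 : b.val + 1 < a.val := by omega
      have hcd : a.val - 1 < d := by have := a.isLt; omega
      have hQ1 : Stmt13.Q d ℓ a ⟨a.val - 1, hcd⟩ :=
        Stmt13.Q_dn' a.isLt hcd (by omega) (fun k hk1 hk2 => hdn k (by omega) (by omega))
      have hQ2 : Stmt13.Q d ℓ ⟨a.val - 1, hcd⟩ b :=
        Stmt13.Q_dn' hcd b.isLt (by omega) (fun k hk1 hk2 => hdn k hk1 (by omega))
      rcases hmin _ hQ1 hQ2 with h | h
      · have hv : a.val - 1 = a.val := congrArg Fin.val h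
        omega
      · have hv : a.val - 1 = b.val := congrArg Fin.val h
        omega
  · intro j h
    cases hdir : Stmt13.dirf ℓ j with
    | true =>
      left
      exact Stmt13.Q_up' (Nat.lt_of_succ_lt h) h (by omega) (fun k hk1 hk2 => by
        rw [(by omega : k = j)]; exact hdir)
    | false =>
      right
      exact Stmt13.Q_dn' h (Nat.lt_of_succ_lt h) (by omega) (fun k hk1 hk2 => by
        rw [(by omega : k = j)]; exact hdir)
  · ext y
    simp only [Set.mem_image, Set.mem_inter_iff]
    constructor
    · rintro ⟨x, ⟨hO, hC⟩, rfl⟩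
      have he : ((Stmt13.Amat d ℓ).map (Int.cast : ℤ → ℝ)).mulVec x +
          (fun i => (((0 : Fin d → ℤ) i : ℤ) : ℝ)) = Stmt13.Tm d ℓ x := by
        rw [Stmt13.mulVec_eq]
        funext i
        simp
      rw [he]
      exact Stmt13.forward hd0 x hO hC
    · intro hy
      refine ⟨fun j => Stmt13.invTm d ℓ y j.val,
        ⟨(Stmt13.backward hd0 y hy).1, (Stmt13.backward hd0 y hy).2⟩, ?_⟩
      rw [Stmt13.mulVec_eq]
      funext i
      have := Stmt13.Tm_invTm (d := d) (ℓ := ℓ) y i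
      simp [this]
end

section
/- Let P be a finite poset on [d] whose Hasse diagram contains a cycle, with an edge {i,j} (i ≺ j a cover relation) lying on a cycle. Then there exists an edge partition ℓ of P such that the order-chain polytope OC_ℓ(P) = O(P'_ℓ) ∩ C(P''_ℓ) has a non-integral vertex; specifically the partition ℓ = (E(P)∖{e}, {e}) with e = {i,j} yields a vertex with some coordinates equal to 1/2. -/
/-- The Hasse diagram of `r`, as an undirected simple graph. -/
def hasseGraph {d : ℕ} (r : Fin d → Fin d → Prop) : SimpleGraph (Fin d) where
  Adj a b := (covRel r a b ∨ covRel r b a) ∧ a ≠ b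
  symm := ⟨fun a b h => ⟨h.1.symm, h.2.symm⟩⟩
  loopless := ⟨fun a h => h.2 rfl⟩

/-!
Let `S` be the connected component of `i` in the Hasse diagram with the edge `{i, j}` deleted;
since `{i, j}` lies on a cycle, `j ∈ S`. The point `v = ½·𝟙_S` lies in `OC_ℓ(P)`: every relation of
`P'_ℓ` stays inside a component, so `v` is constant along it, and the chains of `P''_ℓ` (the single
relation `i ≺ j`) have at most two elements. It is a vertex because the constraints tight at `v`
determine it: equality along every edge of the deleted diagram makes a point constant on `S`,
`x_i + x_j = 1` then forces the value `½`, and `x_k = 0` off `S`.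
-/

open SimpleGraph

theorem LinearMap.eq_of_le_of_mem_openSegment {𝕜 E : Type*} [Field 𝕜] [LinearOrder 𝕜]
    [IsStrictOrderedRing 𝕜] [AddCommGroup E] [Module 𝕜 E] (f : E →ₗ[𝕜] 𝕜) {x y v : E} {c : 𝕜}
    (hx : f x ≤ c) (hy : f y ≤ c) (hv : v ∈ openSegment 𝕜 x y) (hfv : f v = c) : f x = c := by
  obtain ⟨a, b, ha, hb, hab, rfl⟩ := hv
  simp only [map_add, map_smul, smul_eq_mul] at hfv
  have hxa : 0 ≤ a * (c - f x) := mul_nonneg ha.le (sub_nonneg.2 hx)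
  have hyb : 0 ≤ b * (c - f y) := mul_nonneg hb.le (sub_nonneg.2 hy)
  have hsum : a * (c - f x) + b * (c - f y) = 0 := by linear_combination c * hab - hfv
  have hxa0 : a * (c - f x) = 0 := by linarith
  linarith [(mul_eq_zero.1 hxa0).resolve_left ha.ne']

theorem SimpleGraph.Reachable.apply_eq {V β : Type*} {G : SimpleGraph V} {f : V → β}
    (hf : ∀ u w, G.Adj u w → f u = f w) {a b : V} (h : G.Reachable a b) : f a = f b := by
  have h' := (G.reachable_iff_reflTransGen a b).1 h
  clear h
  induction h' with
  | refl => rfl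
  | tail _ huw ih => exact ih.trans (hf _ _ huw)

def pairOrder {α : Type*} (i j : α) (a b : α) : Prop :=
  a = b ∨ a = i ∧ b = j

theorem Relation.reflTransGen_eq_and_eq_iff {α : Type*} {i j a b : α} (hij : i ≠ j) :
    Relation.ReflTransGen (fun a b => a = i ∧ b = j) a b ↔ pairOrder i j a b := by
  constructor
  · intro h
    induction h with
    | refl => exact Or.inl rfl
    | tail _ hcb ih =>
      rcases ih with rfl | ⟨-, rfl⟩
      · exact Or.inr hcb
      · exact absurd hcb.1.symm hij
  · rintro (rfl | ⟨rfl, rfl⟩)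
    exacts [.refl, .single ⟨rfl, rfl⟩]

theorem card_le_two_of_isChain_pairOrder {α : Type*} {i j : α} {C : Finset α}
    (hC : IsChain (pairOrder i j) (C : Set α)) : C.card ≤ 2 := by
  by_contra! h
  obtain ⟨a, b, c, ha, hb, hc, hab, hac, hbc⟩ := Finset.two_lt_card_iff.1 h
  have := hC ha hb hab
  have := hC ha hc hac
  grind [pairOrder]

theorem isMaxChain_pairOrder {α : Type*} {i j : α} :
    IsMaxChain (pairOrder i j) {i, j} := by
  refine ⟨.pair (Or.inr ⟨rfl, rfl⟩), fun t ht hsub => hsub.antisymm fun x hx => ?_⟩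
  have hi : i ∈ t := hsub (Set.mem_insert i {j})
  by_cases hxi : x = i
  · exact Or.inl hxi
  · have := ht hx hi hxi
    grind [pairOrder]

theorem mem_chainPolytope_of_le_half {d : ℕ} {R : Fin d → Fin d → Prop}
    (hR : ∀ C : Finset (Fin d), IsChain R (C : Set (Fin d)) → C.card ≤ 2) {x : Fin d → ℝ}
    (hx₀ : ∀ k, 0 ≤ x k) (hx : ∀ k, x k ≤ 1 / 2) : x ∈ chainPolytope R := by
  refine ⟨hx₀, fun C hC => ?_⟩
  have hcard : (C.card : ℝ) ≤ 2 := by exact_mod_cast hR C hC.1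
  calc ∑ k ∈ C, x k ≤ C.card • (1 / 2 : ℝ) := Finset.sum_le_card_nsmul _ _ _ fun k _ => hx k
    _ ≤ 1 := by rw [nsmul_eq_mul]; linarith

section

variable {d : ℕ} {r : Fin d → Fin d → Prop} {i j : Fin d}

theorem genOrd_covRel_and_eq_and_eq (hij : covRel r i j) :
    genOrd (fun a b : Fin d => covRel r a b ∧ (a = i ∧ b = j)) = pairOrder i j := by
  have hgen : (fun a b : Fin d => covRel r a b ∧ (a = i ∧ b = j)) = fun a b => a = i ∧ b = j := by
    ext a b
    exact ⟨And.right, fun ⟨ha, hb⟩ => ⟨ha ▸ hb ▸ hij, ha, hb⟩⟩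
  ext a b
  rw [genOrd, hgen, Relation.reflTransGen_eq_and_eq_iff hij.2.1]

theorem reachable_deleteEdges_of_genOrd
    (hji : ((hasseGraph r).deleteEdges {s(i, j)}).Reachable j i) {a b : Fin d}
    (h : genOrd (fun a b : Fin d => covRel r a b ∧ ¬ (a = i ∧ b = j)) a b) :
    ((hasseGraph r).deleteEdges {s(i, j)}).Reachable a b := by
  induction h with
  | refl => rfl
  | @tail c b _ hcb ih =>
    refine ih.trans ?_
    obtain ⟨hcov, hne⟩ := hcb
    by_cases hedge : s(c, b) = s(i, j)
    · -- the reversed edge `j ⋖ i` is bridged by the rest of the cycle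
      obtain ⟨rfl, rfl⟩ : c = j ∧ b = i := by simpa [hne] using hedge
      exact hji
    · exact Adj.reachable (by simpa [hedge] using ⟨Or.inl hcov, hcov.2.1⟩)

theorem genOrd_of_adj_deleteEdges {a b : Fin d}
    (h : ((hasseGraph r).deleteEdges {s(i, j)}).Adj a b) :
    genOrd (fun a b : Fin d => covRel r a b ∧ ¬ (a = i ∧ b = j)) a b ∨
      genOrd (fun a b : Fin d => covRel r a b ∧ ¬ (a = i ∧ b = j)) b a := by
  rw [deleteEdges_adj] at h
  obtain ⟨⟨hcov | hcov, -⟩, hedge⟩ := h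
  · exact Or.inl (.single ⟨hcov, by rintro ⟨rfl, rfl⟩; simp at hedge⟩)
  · exact Or.inr (.single ⟨hcov, by rintro ⟨rfl, rfl⟩; simp [Sym2.eq_swap] at hedge⟩)

variable (r i j) in
noncomputable def halfComponentIndicator : Fin d → ℝ :=
  {k | ((hasseGraph r).deleteEdges {s(i, j)}).Reachable i k}.indicator fun _ => 1 / 2

theorem halfComponentIndicator_of_reachable {k : Fin d}
    (hk : ((hasseGraph r).deleteEdges {s(i, j)}).Reachable i k) :
    halfComponentIndicator r i j k = 1 / 2 := by
  simp [halfComponentIndicator, hk]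

theorem halfComponentIndicator_of_not_reachable {k : Fin d}
    (hk : ¬ ((hasseGraph r).deleteEdges {s(i, j)}).Reachable i k) :
    halfComponentIndicator r i j k = 0 := by
  simp [halfComponentIndicator, hk]

theorem halfComponentIndicator_eq_of_reachable {a b : Fin d}
    (h : ((hasseGraph r).deleteEdges {s(i, j)}).Reachable a b) :
    halfComponentIndicator r i j a = halfComponentIndicator r i j b := by
  by_cases ha : ((hasseGraph r).deleteEdges {s(i, j)}).Reachable i a
  · rw [halfComponentIndicator_of_reachable ha, halfComponentIndicator_of_reachable (ha.trans h)]
  · rw [halfComponentIndicator_of_not_reachable ha,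
      halfComponentIndicator_of_not_reachable fun hb => ha (hb.trans h.symm)]

theorem halfComponentIndicator_nonneg (k : Fin d) : 0 ≤ halfComponentIndicator r i j k :=
  Set.indicator_nonneg (fun _ _ => by norm_num) k

theorem halfComponentIndicator_le_half (k : Fin d) : halfComponentIndicator r i j k ≤ 1 / 2 :=
  Set.indicator_le_self' (fun _ _ => by norm_num) k

theorem halfComponentIndicator_mem_orderPolytope_inter_chainPolytope
    (hji : ((hasseGraph r).deleteEdges {s(i, j)}).Reachable j i) :
    halfComponentIndicator r i j ∈
      orderPolytope (genOrd fun a b : Fin d => covRel r a b ∧ ¬ (a = i ∧ b = j)) ∩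
        chainPolytope (pairOrder i j) := by
  refine ⟨⟨fun k => ⟨halfComponentIndicator_nonneg k, ?_⟩, fun a b hab => ?_⟩, ?_⟩
  · linarith [halfComponentIndicator_le_half (r := r) (i := i) (j := j) k]
  · exact (halfComponentIndicator_eq_of_reachable (reachable_deleteEdges_of_genOrd hji hab)).ge
  · exact mem_chainPolytope_of_le_half (fun C => card_le_two_of_isChain_pairOrder)
      halfComponentIndicator_nonneg halfComponentIndicator_le_half

theorem eq_halfComponentIndicator_of_mem_openSegment (hne : i ≠ j)
    (hji : ((hasseGraph r).deleteEdges {s(i, j)}).Reachable j i) {x y : Fin d → ℝ}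
    (hx : x ∈ orderPolytope (genOrd fun a b : Fin d => covRel r a b ∧ ¬ (a = i ∧ b = j)) ∩
      chainPolytope (pairOrder i j))
    (hy : y ∈ orderPolytope (genOrd fun a b : Fin d => covRel r a b ∧ ¬ (a = i ∧ b = j)) ∩
      chainPolytope (pairOrder i j))
    (hv : halfComponentIndicator r i j ∈ openSegment ℝ x y) :
    x = halfComponentIndicator r i j := by
  have tight : ∀ (f : (Fin d → ℝ) →ₗ[ℝ] ℝ) (c : ℝ),
      (∀ z ∈ orderPolytope (genOrd fun a b : Fin d => covRel r a b ∧ ¬ (a = i ∧ b = j)) ∩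
        chainPolytope (pairOrder i j), f z ≤ c) →
      f (halfComponentIndicator r i j) = c → f x = c :=
    fun f c hf hfv => f.eq_of_le_of_mem_openSegment (hf x hx) (hf y hy) hv hfv
  have horder : ∀ a b, genOrd (fun a b : Fin d => covRel r a b ∧ ¬ (a = i ∧ b = j)) a b →
      x a = x b := by
    intro a b hab
    have hvab := halfComponentIndicator_eq_of_reachable (reachable_deleteEdges_of_genOrd hji hab)
    have := tight (.proj b - .proj a) 0 (fun z hz => by simpa using hz.1.2 a b hab)
      (by simp [hvab])
    simp only [LinearMap.sub_apply, LinearMap.proj_apply, sub_eq_zero] at this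
    exact this.symm
  have hcomp : ∀ k, ((hasseGraph r).deleteEdges {s(i, j)}).Reachable i k → x k = x i :=
    fun k hk => (hk.apply_eq fun u w huw =>
      (genOrd_of_adj_deleteEdges huw).elim (horder u w) fun h => (horder w u h).symm).symm
  have hpair : x i + x j = 1 := by
    have hmax : IsMaxChain (pairOrder i j) (({i, j} : Finset (Fin d)) : Set (Fin d)) := by
      simpa using isMaxChain_pairOrder
    have := tight (.proj i + .proj j) 1
      (fun z hz => by simpa [Finset.sum_pair hne] using hz.2.2 {i, j} hmax)
      (by norm_num [halfComponentIndicator_of_reachable .rfl,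
        halfComponentIndicator_of_reachable hji.symm])
    simpa using this
  have hzero : ∀ k, ¬ ((hasseGraph r).deleteEdges {s(i, j)}).Reachable i k → x k = 0 := by
    intro k hk
    have := tight (-.proj k) 0 (fun z hz => by simpa using (hz.1.1 k).1)
      (by simp [halfComponentIndicator_of_not_reachable hk])
    simpa using this
  funext k
  by_cases hk : ((hasseGraph r).deleteEdges {s(i, j)}).Reachable i k
  · rw [halfComponentIndicator_of_reachable hk, hcomp k hk]
    linarith [hcomp j hji.symm]
  · rw [halfComponentIndicator_of_not_reachable hk, hzero k hk]

theorem halfComponentIndicator_mem_extremePoints (hne : i ≠ j)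
    (hji : ((hasseGraph r).deleteEdges {s(i, j)}).Reachable j i) :
    halfComponentIndicator r i j ∈ Set.extremePoints ℝ
      (orderPolytope (genOrd fun a b : Fin d => covRel r a b ∧ ¬ (a = i ∧ b = j)) ∩
        chainPolytope (pairOrder i j)) :=
  mem_extremePoints.2 ⟨halfComponentIndicator_mem_orderPolytope_inter_chainPolytope hji,
    fun x hx y hy hv => ⟨eq_halfComponentIndicator_of_mem_openSegment hne hji hx hy hv,
      eq_halfComponentIndicator_of_mem_openSegment hne hji hy hx (openSegment_symm ℝ x y ▸ hv)⟩⟩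

end

theorem stmt_14_general (d : ℕ) (r : Fin d → Fin d → Prop)
    (i j : Fin d) (hij : covRel r i j)
    (hcyc : ∃ (a : Fin d) (w : (hasseGraph r).Walk a a),
      w.IsCycle ∧ s(i, j) ∈ w.edges) :
    ∃ v ∈ Set.extremePoints ℝ
        (orderPolytope (genOrd fun a b : Fin d => covRel r a b ∧ ¬ (a = i ∧ b = j)) ∩
         chainPolytope (genOrd fun a b : Fin d => covRel r a b ∧ (a = i ∧ b = j))),
      ∃ k : Fin d, v k = 1 / 2 := by
  have hji : ((hasseGraph r).deleteEdges {s(i, j)}).Reachable j i :=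
    (adj_and_reachable_delete_edges_iff_exists_cycle.2 hcyc).2.symm
  rw [genOrd_covRel_and_eq_and_eq hij]
  exact ⟨_, halfComponentIndicator_mem_extremePoints hij.2.1 hji, i,
    halfComponentIndicator_of_reachable .rfl⟩

/-- if the Hasse diagram of `P` contains a cycle through the cover edge
`{i,j}`, then the edge partition `ℓ = (E(P)∖{e}, {e})` with `e = {i,j}` yields an
order-chain polytope with a (non-integral) vertex having a coordinate equal to `1/2`. -/
theorem stmt_14 (d : ℕ) (r : Fin d → Fin d → Prop) (hpo : IsPartialOrder (Fin d) r)
    (i j : Fin d) (hij : covRel r i j)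
    (hcyc : ∃ (a : Fin d) (w : (hasseGraph r).Walk a a),
      w.IsCycle ∧ s(i, j) ∈ w.edges) :
    ∃ v ∈ Set.extremePoints ℝ
        (orderPolytope (genOrd fun a b : Fin d => covRel r a b ∧ ¬ (a = i ∧ b = j)) ∩
         chainPolytope (genOrd fun a b : Fin d => covRel r a b ∧ (a = i ∧ b = j))),
      ∃ k : Fin d, v k = 1 / 2 :=
  stmt_14_general d r i j hij hcyc
end

section
/- Let P be any finite poset on [d] and S a subset of the set of minimal elements of P. Let E_S(P) be the set of cover relations incident to some element of S. Then the edge partition ℓ = (E(P)∖E_S(P), E_S(P)) is integral, i.e., every vertex of OC_ℓ(P) = O(P'_ℓ) ∩ C(P''_ℓ) has integer coordinates. -/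
open Filter Topology

section OrderAndChainPolytopes

variable {d : ℕ}

theorem orderPolytope_genOrd (o : Fin d → Fin d → Prop) :
    orderPolytope (genOrd o) = {x | (∀ i, 0 ≤ x i ∧ x i ≤ 1) ∧ ∀ i j, o i j → x j ≤ x i} := by
  ext x
  refine ⟨fun ⟨hbox, hx⟩ => ⟨hbox, fun i j h => hx i j (.single h)⟩, fun ⟨hbox, hx⟩ => ⟨hbox, ?_⟩⟩
  intro i j h
  induction h with
  | refl => exact le_rfl
  | tail _ hjk ih => exact (hx _ _ hjk).trans ih

theorem sum_le_one_of_mem_chainPolytope {r : Fin d → Fin d → Prop} {x : Fin d → ℝ}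
    (hx : x ∈ chainPolytope r) {C : Finset (Fin d)} (hC : IsChain r (C : Set (Fin d))) :
    ∑ i ∈ C, x i ≤ 1 := by
  obtain ⟨M, hM, hCM⟩ := hC.exists_maxChain
  lift M to Finset (Fin d) using M.toFinite
  calc ∑ i ∈ C, x i ≤ ∑ i ∈ M, x i :=
        Finset.sum_le_sum_of_subset_of_nonneg (Finset.coe_subset.1 hCM) fun i _ _ => hx.1 i
    _ ≤ 1 := hx.2 M hM

variable {c : Fin d → Fin d → Prop} {S : Set (Fin d)}

theorem genOrd_eq_or_of_source (hc : ∀ a b, c a b → a ∈ S ∧ b ∉ S) {a b : Fin d}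
    (h : genOrd c a b) : a = b ∨ c a b := by
  rcases Relation.ReflTransGen.cases_head h with rfl | ⟨m, ham, hmb⟩
  · exact .inl rfl
  rcases Relation.ReflTransGen.cases_head hmb with rfl | ⟨n, hmn, -⟩
  · exact .inr ham
  · exact absurd (hc _ _ hmn).1 (hc _ _ ham).2

theorem rel_or_rel_of_isChain_genOrd (hc : ∀ a b, c a b → a ∈ S ∧ b ∉ S) {s : Set (Fin d)}
    (hs : IsChain (genOrd c) s) {a b : Fin d} (ha : a ∈ s) (hb : b ∈ s) (hab : a ≠ b) :
    c a b ∨ c b a := by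
  rcases hs ha hb hab with h | h
  · exact .inl ((genOrd_eq_or_of_source hc h).resolve_left hab)
  · exact .inr ((genOrd_eq_or_of_source hc h).resolve_left (Ne.symm hab))

theorem card_le_two_of_isChain_genOrd (hc : ∀ a b, c a b → a ∈ S ∧ b ∉ S)
    {C : Finset (Fin d)} (hC : IsChain (genOrd c) (C : Set (Fin d))) : C.card ≤ 2 := by
  have hcross : ∀ a ∈ C, ∀ b ∈ C, a ≠ b → (a ∈ S ↔ b ∉ S) := fun a ha b hb hab => by
    rcases rel_or_rel_of_isChain_genOrd hc hC ha hb hab with h | h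
    · exact iff_of_true (hc a b h).1 (hc a b h).2
    · exact iff_of_false (hc b a h).2 (not_not.2 (hc b a h).1)
  by_contra! h
  obtain ⟨a, ha, b, hb, e, he, hab, hae, hbe⟩ := Finset.two_lt_card.1 h
  have := hcross a ha b hb hab
  have := hcross a ha e he hae
  have := hcross b hb e he hbe
  tauto

theorem chainPolytope_genOrd (hc : ∀ a b, c a b → a ∈ S ∧ b ∉ S) :
    chainPolytope (genOrd c) = {x | (∀ i, 0 ≤ x i ∧ x i ≤ 1) ∧ ∀ a b, c a b → x a + x b ≤ 1} := by
  ext x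
  constructor
  · intro hx
    refine ⟨fun i => ⟨hx.1 i, ?_⟩, fun a b hab => ?_⟩
    · simpa using sum_le_one_of_mem_chainPolytope hx (C := {i}) (by simp [IsChain.singleton])
    · have hne : a ≠ b := fun h => (hc a b hab).2 (h ▸ (hc a b hab).1)
      have := sum_le_one_of_mem_chainPolytope hx (C := {a, b})
        (by simpa using IsChain.pair (r := genOrd c) (.single hab))
      rwa [Finset.sum_pair hne] at this
  · rintro ⟨hbox, hpair⟩
    refine ⟨fun i => (hbox i).1, fun C hC => ?_⟩
    have hcard := card_le_two_of_isChain_genOrd hc hC.1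
    interval_cases h : C.card
    · simp [Finset.card_eq_zero.1 h]
    · obtain ⟨a, rfl⟩ := Finset.card_eq_one.1 h
      simpa using (hbox a).2
    · obtain ⟨a, b, hab, rfl⟩ := Finset.card_eq_two.1 h
      rw [Finset.sum_pair hab]
      rcases rel_or_rel_of_isChain_genOrd hc hC.1 (by simp) (by simp) hab with h | h
      · exact hpair a b h
      · linarith [hpair b a h]

end OrderAndChainPolytopes

theorem eventually_add_mul_le {a b β : ℝ} (h : a ≤ β) (htight : a = β → b = 0) :
    ∀ᶠ s in 𝓝 (0 : ℝ), a + s * b ≤ β := by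
  rcases h.lt_or_eq with hlt | rfl
  · have : Tendsto (fun s : ℝ => a + s * b) (𝓝 0) (𝓝 a) :=
      (show Continuous fun s : ℝ => a + s * b by fun_prop).tendsto' 0 a (by simp)
    exact (this.eventually_lt_const hlt).mono fun _ => le_of_lt
  · simp [htight rfl]

theorem eq_zero_of_mem_extremePoints_of_eventually_add_smul_mem {E : Type*} [AddCommGroup E]
    [Module ℝ E] {A : Set E} {v w : E} (hv : v ∈ A.extremePoints ℝ)
    (hw : ∀ᶠ s in 𝓝 (0 : ℝ), v + s • w ∈ A) :
    w = 0 := by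
  have hw' : ∀ᶠ s in 𝓝 (0 : ℝ), v + (-s) • w ∈ A :=
    (continuous_neg.tendsto' 0 0 neg_zero).eventually hw
  obtain ⟨s, ⟨h₁, h₂⟩, hs⟩ :=
    ((hw.and hw').filter_mono nhdsWithin_le_nhds |>.and (self_mem_nhdsWithin (s := {0}ᶜ))).exists
  have hseg : v ∈ openSegment ℝ (v + s • w) (v + (-s) • w) :=
    ⟨1 / 2, 1 / 2, by norm_num, by norm_num, by norm_num, by module⟩
  exact (smul_eq_zero.1 (add_eq_left.1 (hv.2 h₁ h₂ hseg))).resolve_left hs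

section LevelDirection

variable {ι : Type*} (S : Set ι) (v : ι → ℝ) (t : ℝ)

open Classical in
noncomputable def levelDirection : ι → ℝ :=
  fun i => if v i = t ∨ v i = 1 - t then (if i ∈ S then -1 else 1) else 0

variable {S v t}

theorem levelDirection_eq_zero_of_eq_zero_or_eq_one (ht₀ : 0 < t) (ht₁ : t < 1) {i : ι}
    (hi : v i = 0 ∨ v i = 1) : levelDirection S v t i = 0 := by
  have : ¬(v i = t ∨ v i = 1 - t) := by rcases hi with h | h <;> rw [h] <;> grind
  simp [levelDirection, this]

theorem levelDirection_eq_of_eq {i j : ι} (hS : i ∈ S ↔ j ∈ S) (h : v i = v j) :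
    levelDirection S v t i = levelDirection S v t j := by
  simp only [levelDirection, h]
  split_ifs <;> simp_all

theorem levelDirection_add_eq_zero {a b : ι} (hS : a ∈ S ↔ b ∉ S) (h : v a + v b = 1) :
    levelDirection S v t a + levelDirection S v t b = 0 := by
  have hlevel : (v a = t ∨ v a = 1 - t) ↔ (v b = t ∨ v b = 1 - t) := by
    rw [eq_sub_of_add_eq' h]; grind
  by_cases hb : b ∈ S <;> simp [levelDirection, hS, hb, hlevel] <;> split_ifs <;> norm_num

theorem levelDirection_self_ne_zero (i : ι) : levelDirection S v (v i) i ≠ 0 := by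
  by_cases hi : i ∈ S <;> simp [levelDirection, hi]

end LevelDirection

section EdgePolytope

variable {d : ℕ} {o c : Fin d → Fin d → Prop} {S : Set (Fin d)}

def edgePolytope (o c : Fin d → Fin d → Prop) : Set (Fin d → ℝ) :=
  {x | (∀ i, 0 ≤ x i ∧ x i ≤ 1) ∧ (∀ i j, o i j → x j ≤ x i) ∧ ∀ a b, c a b → x a + x b ≤ 1}

theorem orderPolytope_genOrd_inter_chainPolytope_genOrd (hc : ∀ a b, c a b → a ∈ S ∧ b ∉ S) :
    orderPolytope (genOrd o) ∩ chainPolytope (genOrd c) = edgePolytope o c := by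
  rw [orderPolytope_genOrd, chainPolytope_genOrd hc]
  ext x
  simp only [edgePolytope, Set.mem_inter_iff, Set.mem_ofPred_eq]
  tauto

theorem eventually_add_smul_mem_edgePolytope {v w : Fin d → ℝ} (hv : v ∈ edgePolytope o c)
    (hbox : ∀ i, v i = 0 ∨ v i = 1 → w i = 0)
    (ho : ∀ i j, o i j → v j = v i → w j = w i)
    (hc : ∀ a b, c a b → v a + v b = 1 → w a + w b = 0) :
    ∀ᶠ s in 𝓝 (0 : ℝ), v + s • w ∈ edgePolytope o c := by
  obtain ⟨hv01, hvo, hvc⟩ := hv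
  simp only [edgePolytope, Set.mem_ofPred_eq, Pi.add_apply, Pi.smul_apply, smul_eq_mul]
  refine (eventually_all.2 fun i => ?_).and ((eventually_all.2 fun i => eventually_all.2 fun j =>
    eventually_imp_distrib_left.2 fun hij => ?_).and (eventually_all.2 fun a =>
    eventually_all.2 fun b => eventually_imp_distrib_left.2 fun hab => ?_))
  · have h₀ := eventually_add_mul_le (a := -v i) (b := -w i) (β := 0) (by linarith [hv01 i])
      fun h => by simp [hbox i (.inl (neg_eq_zero.1 h))]
    have h₁ := eventually_add_mul_le (hv01 i).2 fun h => hbox i (.inr h)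
    exact (h₀.and h₁).mono fun s hs => ⟨by linarith [hs.1], hs.2⟩
  · have := eventually_add_mul_le (a := v j - v i) (b := w j - w i) (β := 0)
      (by linarith [hvo i j hij]) fun h => by rw [ho i j hij (by linarith), sub_self]
    exact this.mono fun s hs => by linarith
  · have := eventually_add_mul_le (hvc a b hab) (hc a b hab)
    exact this.mono fun s hs => by linarith

end EdgePolytope

theorem exists_int_eq_of_mem_extremePoints_edgePolytope {d : ℕ} {o c : Fin d → Fin d → Prop}
    {S : Set (Fin d)} (ho : ∀ a b, o a b → (a ∈ S ↔ b ∈ S)) (hc : ∀ a b, c a b → (a ∈ S ↔ b ∉ S))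
    {v : Fin d → ℝ} (hv : v ∈ (edgePolytope o c).extremePoints ℝ) (k : Fin d) :
    ∃ z : ℤ, v k = z := by
  obtain ⟨hk₀, hk₁⟩ := hv.1.1 k
  rcases hk₀.eq_or_lt with h₀ | h₀
  · exact ⟨0, by simp [h₀]⟩
  rcases hk₁.eq_or_lt with h₁ | h₁
  · exact ⟨1, by simp [h₁]⟩
  have hdir := eq_zero_of_mem_extremePoints_of_eventually_add_smul_mem hv
    (eventually_add_smul_mem_edgePolytope hv.1
      (fun i hi => levelDirection_eq_zero_of_eq_zero_or_eq_one h₀ h₁ hi)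
      (fun i j hij h => levelDirection_eq_of_eq (ho i j hij).symm h)
      (fun a b hab h => levelDirection_add_eq_zero (hc a b hab) h))
  exact absurd (congrFun hdir k) (levelDirection_self_ne_zero (S := S) k)

theorem stmt_16_general (d : ℕ) (r : Fin d → Fin d → Prop)
    (S : Set (Fin d)) (hS : ∀ a ∈ S, ∀ b, r b a → b = a) :
    ∀ v ∈ Set.extremePoints ℝ
        (orderPolytope (genOrd fun a b : Fin d => covRel r a b ∧ a ∉ S ∧ b ∉ S) ∩
         chainPolytope (genOrd fun a b : Fin d => covRel r a b ∧ (a ∈ S ∨ b ∈ S))),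
      ∀ k : Fin d, ∃ z : ℤ, v k = z := by
  have hsource : ∀ a b, covRel r a b ∧ (a ∈ S ∨ b ∈ S) → a ∈ S ∧ b ∉ S := by
    rintro a b ⟨⟨hab, hne, -⟩, hab'⟩
    have hb : b ∉ S := fun hb => hne (hS b hb a hab)
    exact ⟨hab'.resolve_right hb, hb⟩
  rw [orderPolytope_genOrd_inter_chainPolytope_genOrd hsource]
  exact fun v hv => exists_int_eq_of_mem_extremePoints_edgePolytope
    (fun a b h => iff_of_false h.2.1 h.2.2)
    (fun a b h => iff_of_true (hsource a b h).1 (hsource a b h).2) hv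

/-- for any poset `P` on `[d]` and any set `S` of minimal elements, the
edge partition `(E(P) ∖ E_S(P), E_S(P))`, where `E_S(P)` consists of the cover relations
incident to `S`, yields an integral order-chain polytope. -/
theorem stmt_16 (d : ℕ) (r : Fin d → Fin d → Prop) (hpo : IsPartialOrder (Fin d) r)
    (S : Set (Fin d)) (hS : ∀ a ∈ S, ∀ b, r b a → b = a) :
    ∀ v ∈ Set.extremePoints ℝ
        (orderPolytope (genOrd fun a b : Fin d => covRel r a b ∧ a ∉ S ∧ b ∉ S) ∩
         chainPolytope (genOrd fun a b : Fin d => covRel r a b ∧ (a ∈ S ∨ b ∈ S))),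
      ∀ k : Fin d, ∃ z : ℤ, v k = z :=
  stmt_16_general d r S hS
end

section
/- For any finite poset P on [d], the dimension of the order-chain polytope OC_ℓ(P) = O(P'_ℓ) ∩ C(P''_ℓ) equals d, for every edge partition ℓ; in particular OC_ℓ(P) has nonempty interior in ℝ^d. -/
/-- for every poset on `[d]` and every edge partition, the order-chain
polytope is full-dimensional: its affine span is all of `ℝ^d` and it has nonempty
interior. -/
theorem stmt_17 (d : ℕ) (hd : 1 ≤ d) (r : Fin d → Fin d → Prop)
    (hpo : IsPartialOrder (Fin d) r) (ℓ : Fin d → Fin d → Bool) :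
    affineSpan ℝ
        (orderPolytope (genOrd fun a b : Fin d => covRel r a b ∧ ℓ a b = true) ∩
         chainPolytope (genOrd fun a b : Fin d => covRel r a b ∧ ℓ a b = false)) = ⊤ ∧
    (interior
        (orderPolytope (genOrd fun a b : Fin d => covRel r a b ∧ ℓ a b = true) ∩
         chainPolytope (genOrd fun a b : Fin d => covRel r a b ∧ ℓ a b = false))).Nonempty := by
  classical
  set S := (orderPolytope (genOrd fun a b : Fin d => covRel r a b ∧ ℓ a b = true) ∩
         chainPolytope (genOrd fun a b : Fin d => covRel r a b ∧ ℓ a b = false)) with hS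
  -- both generated orders are contained in r
  have hsub : ∀ (e : Fin d → Fin d → Prop), (∀ a b, e a b → r a b) →
      ∀ i j, genOrd e i j → r i j := by
    intro e he i j hij
    induction hij with
    | refl => exact hpo.refl _
    | tail _ hlast ih => exact hpo.trans _ _ _ ih (he _ _ hlast)
  -- the "height" function
  set h : Fin d → ℕ := fun i => (Finset.univ.filter (fun k => r k i ∧ k ≠ i)).card with hh
  have hlt : ∀ i j, r i j → i ≠ j → h i < h j := by
    intro i j hij hne
    apply Finset.card_lt_card
    constructor
    · intro k hk
      simp only [Finset.mem_filter, Finset.mem_univ, true_and] at hk ⊢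
      refine ⟨hpo.trans _ _ _ hk.1 hij, ?_⟩
      rintro rfl
      exact hne (hpo.antisymm _ _ hij hk.1)
    · intro hcon
      have : i ∈ Finset.univ.filter (fun k => r k j ∧ k ≠ j) := by
        simp [hij, hne]
      have := hcon this
      simp only [Finset.mem_filter, Finset.mem_univ, true_and] at this
      exact this.2 rfl
  have hub : ∀ i, h i ≤ d - 1 := by
    intro i
    have hsub' : (Finset.univ.filter (fun k => r k i ∧ k ≠ i)) ⊆ Finset.univ.erase i := by
      intro k hk
      simp only [Finset.mem_filter, Finset.mem_univ, true_and] at hk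
      exact Finset.mem_erase.2 ⟨hk.2, Finset.mem_univ _⟩
    calc h i ≤ (Finset.univ.erase i).card := Finset.card_le_card hsub'
      _ = d - 1 := by rw [Finset.card_erase_of_mem (Finset.mem_univ _)]; simp
  have hD1 : (1 : ℝ) ≤ (d : ℝ) := by exact_mod_cast hd
  have hD0 : (0 : ℝ) < (d : ℝ) := lt_of_lt_of_le one_pos hD1
  obtain ⟨ε, δ, hε0, hδ0, hδε, hub1, hubD⟩ :
      ∃ ε δ : ℝ, 0 < ε ∧ 0 < δ ∧ 2 * δ < ε ∧ ε * d + δ ≤ 1 ∧ (d : ℝ) * (ε * d + δ) ≤ 1 := by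
    refine ⟨1 / (4 * (d:ℝ) ^ 2), 1 / (16 * (d:ℝ) ^ 2), by positivity, by positivity, ?_, ?_, ?_⟩
    · have he : 2 * (1 / (16 * (d:ℝ) ^ 2)) = 1 / (8 * (d:ℝ) ^ 2) := by ring
      rw [he, div_lt_div_iff₀ (by positivity) (by positivity)]
      nlinarith
    · rw [div_mul_eq_mul_div, div_add_div _ _ (by positivity) (by positivity),
        div_le_one (by positivity)]
      nlinarith [sq_nonneg ((d:ℝ) - 1), sq_nonneg (d:ℝ), mul_pos hD0 hD0]
    · rw [div_mul_eq_mul_div, div_add_div _ _ (by positivity) (by positivity),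
        ← mul_div_assoc, div_le_one (by positivity)]
      have hD3 : (d:ℝ)^3 ≤ (d:ℝ)^4 := pow_le_pow_right₀ hD1 (by norm_num)
      nlinarith [pow_nonneg hD0.le 4, pow_nonneg hD0.le 3]
  -- the center point
  set x₀ : Fin d → ℝ := fun i => ε * ((d : ℝ) - (h i : ℝ)) with hx₀
  have hhD : ∀ i, (h i : ℝ) ≤ (d : ℝ) - 1 := by
    intro i
    have h1 : (h i : ℝ) ≤ ((d - 1 : ℕ) : ℝ) := by exact_mod_cast hub i
    have h2 : ((d - 1 : ℕ) : ℝ) = (d : ℝ) - 1 := by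
      push_cast [Nat.cast_sub hd]; ring
    linarith [h2 ▸ h1]
  have hx₀lb : ∀ i, ε ≤ x₀ i := by
    intro i
    simp only [hx₀]
    nlinarith [hhD i, hε0]
  have hx₀ub : ∀ i, x₀ i ≤ ε * d := by
    intro i
    simp only [hx₀]
    nlinarith [(Nat.cast_nonneg (h i) : (0:ℝ) ≤ (h i : ℝ)), hε0]
  -- the ball around x₀ is inside S
  have hball : Metric.ball x₀ δ ⊆ S := by
    intro y hy
    have hyd : ∀ i, |y i - x₀ i| < δ := by
      intro i
      have h1 : dist (y i) (x₀ i) ≤ dist y x₀ := dist_le_pi_dist y x₀ i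
      have h2 : dist y x₀ < δ := Metric.mem_ball.1 hy
      rw [Real.dist_eq] at h1
      linarith
    have hyub : ∀ i, y i < ε * d + δ := by
      intro i
      have h1 := (abs_lt.1 (hyd i)).2
      have h2 := hx₀ub i
      linarith
    have hylb : ∀ i, 0 < y i := by
      intro i
      have h1 := (abs_lt.1 (hyd i)).1
      have h2 := hx₀lb i
      linarith
    constructor
    · constructor
      · intro i
        exact ⟨(hylb i).le, le_trans (hyub i).le hub1⟩
      · intro i j hij
        by_cases hije : i = j
        · subst hije; exact le_rfl
        · have hr : r i j := hsub _ (fun a b hab => hab.1.1) i j hij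
          have hl : h i < h j := hlt i j hr hije
          have hl' : (h i : ℝ) + 1 ≤ (h j : ℝ) := by exact_mod_cast hl
          have hgap : x₀ j + ε ≤ x₀ i := by
            simp only [hx₀]
            nlinarith [hε0]
          have h1 := (abs_lt.1 (hyd i)).1
          have h2 := (abs_lt.1 (hyd j)).2
          linarith
    · refine ⟨fun i => (hylb i).le, ?_⟩
      intro C _
      have hc : (C.card : ℝ) ≤ (d : ℝ) := by
        have := (Finset.card_le_univ C).trans_eq (by simp : Finset.univ.card = d)
        exact_mod_cast this
      have hpos : (0:ℝ) < ε * d + δ := by positivity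
      calc ∑ i ∈ C, y i ≤ ∑ _i ∈ C, (ε * d + δ) :=
            Finset.sum_le_sum (fun i _ => (hyub i).le)
        _ = C.card * (ε * d + δ) := by rw [Finset.sum_const, nsmul_eq_mul]
        _ ≤ (d : ℝ) * (ε * d + δ) := by nlinarith
        _ ≤ 1 := hubD
  have hx₀mem : x₀ ∈ interior S :=
    mem_interior.2 ⟨Metric.ball x₀ δ, hball, Metric.isOpen_ball, Metric.mem_ball_self hδ0⟩
  have hne : (interior S).Nonempty := ⟨x₀, hx₀mem⟩
  refine ⟨?_, hne⟩
  apply affineSpan_eq_top_of_nonempty_interior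
  exact hne.mono (interior_mono (subset_convexHull ℝ S))
end
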